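/- arXiv:quant-ph/9906131 — 7 statements merged into one kernel-verified Lean document; each statement's English description precedes it below -/
import Mathlib

section
/- Let C ⊆ F₄ⁿ be an even linear code (every codeword has even Hamming weight). Then C is self-orthogonal with respect to the inner product a∗b = Σ_{i=1}^{n} (a_i b_i² + a_i² b_i); that is, for all a, b ∈ C one has Σ_{i=1}^{n} (a_i b_i² + a_i² b_i) = 0 in F₄. -/
/-!
Every nonzero element of F₄ is a cube root of unity, so `∑ i, vᵢ³ = wt v` in F₄, which vanishes
on an even code. In characteristic 2 the form `a ∗ b` is the polarization of the cubic form: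
`aᵢ bᵢ² + aᵢ² bᵢ = (aᵢ + bᵢ)³ + aᵢ³ + bᵢ³`, and `a`, `b`, `a + b` all lie in the code.
-/

local notation "F₄" => GaloisField 2 2

/-- Hamming weight: the number of nonzero coordinates. -/
noncomputable def wt {n : ℕ} (v : Fin n → F₄) : ℕ := Set.ncard {i | v i ≠ 0}

theorem FiniteField.sum_pow_natCard_sub_one {K ι : Type*} [Field K] [Finite K] [Fintype ι]
    (v : ι → K) : ∑ i, v i ^ (Nat.card K - 1) = ({i | v i ≠ 0}.ncard : K) := by
  classical
  have := Fintype.ofFinite K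
  have hpow : ∀ i, v i ^ (Nat.card K - 1) = if v i ≠ 0 then 1 else 0 := fun i => by
    split_ifs with hv
    · rw [Nat.card_eq_fintype_card, FiniteField.pow_card_sub_one_eq_one _ hv]
    · rw [not_not.mp hv, zero_pow (Nat.sub_ne_zero_of_lt Finite.one_lt_card)]
  rw [Finset.sum_congr rfl fun i _ => hpow i, Finset.sum_boole, Set.ncard_eq_toFinset_card',
    Set.toFinset_ofPred]

theorem CharTwo.mul_sq_add_sq_mul {R : Type*} [CommRing R] [CharP R 2] (x y : R) :
    x * y ^ 2 + x ^ 2 * y = (x + y) ^ 3 + x ^ 3 + y ^ 3 := by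
  linear_combination (-(x ^ 3 + y ^ 3 + x ^ 2 * y + x * y ^ 2)) * CharTwo.two_eq_zero (R := R)

theorem sum_cube_eq_wt {n : ℕ} (v : Fin n → F₄) : ∑ i, v i ^ 3 = (wt v : F₄) := by
  have hcard : Nat.card F₄ - 1 = 3 := by rw [GaloisField.card 2 2 two_ne_zero]; rfl
  rw [← hcard, FiniteField.sum_pow_natCard_sub_one, wt]

/-- Lemma 1: an even linear code over F₄ is self-orthogonal with respect to
the inner product `a ∗ b = ∑ i (aᵢ bᵢ² + aᵢ² bᵢ)`. -/
theorem even_code_self_orthogonal (n : ℕ)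
    (C : Submodule F₄ (Fin n → F₄))
    (heven : ∀ v ∈ C, Even (wt v)) :
    ∀ a ∈ C, ∀ b ∈ C, ∑ i, (a i * (b i) ^ 2 + (a i) ^ 2 * b i) = 0 := by
  have sum_cube_eq_zero : ∀ v ∈ C, ∑ i, v i ^ 3 = 0 := fun v hv => by
    rw [sum_cube_eq_wt]
    exact natCast_eq_zero_of_even_of_two_eq_zero (heven v hv) CharTwo.two_eq_zero
  intro a ha b hb
  have sum_cube_add := sum_cube_eq_zero (a + b) (C.add_mem ha hb)
  simp only [Pi.add_apply] at sum_cube_add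
  simp only [CharTwo.mul_sq_add_sq_mul, Finset.sum_add_distrib, sum_cube_add,
    sum_cube_eq_zero a ha, sum_cube_eq_zero b hb, add_zero]
end

section
/- Let C ⊆ F₄ⁿ be an even linear code of dimension k, and let C^⊥ = {w ∈ F₄ⁿ : Σ_{i=1}^n v_i w_i = 0 for all v ∈ C} be its dual with respect to the standard inner product. Then the number of vectors of even Hamming weight in C^⊥ equals ½(4^{n−k} + (−2)ⁿ). -/
/-!
Let `ψ = (-1) ^ Tr` be the primitive `±1`-valued additive character of `F₄`. Poisson summation
for the pair `C, C^⊥` reads `|C| · ∑_{w ∈ C^⊥} f w = ∑_{v ∈ C} f̂ v`, and the transform of a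
product function `f w = ∏ g (w i)` is the product of the one-dimensional transforms `ĝ`.
For `g = 1` this gives `|C^⊥| = 4 ^ (n - k)`. For `g b = (-1) ^ [b ≠ 0]` one finds on `F₄` that
`ĝ a = -2 · (-1) ^ [a ≠ 0]`, so `f̂ v = (-2) ^ n · (-1) ^ wt v = (-2) ^ n` on the even code `C`,
whence `∑_{w ∈ C^⊥} (-1) ^ wt w = (-2) ^ n`. Twice the number of even-weight vectors of `C^⊥` is
the sum of these two quantities.
-/

local notation "F₄" => GaloisField 2 2

/-- The dual code with respect to the standard inner product. -/
def dualSet {n : ℕ} (C : Submodule F₄ (Fin n → F₄)) : Set (Fin n → F₄) :=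
  {w | ∀ v ∈ C, ∑ i, v i * w i = 0}

open Finset Matrix

theorem AddChar.map_sum_eq_prod {A M ι : Type*} [AddCommMonoid A] [CommMonoid M]
    (ψ : AddChar A M) (s : Finset ι) (f : ι → A) : ψ (∑ i ∈ s, f i) = ∏ i ∈ s, ψ (f i) := by
  classical
  induction s using Finset.induction_on with
  | empty => simp
  | insert i s hi ih => rw [sum_insert hi, prod_insert hi, AddChar.map_add_eq_mul, ih]

theorem Set.sum_indicator_one_eq_ncard {α R : Type*} [Fintype α] [AddCommMonoidWithOne R]
    (s : Set α) : ∑ x, s.indicator (fun _ ↦ 1) x = (s.ncard : R) := by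
  classical
  simp [Set.indicator_apply, Finset.sum_boole, Set.ncard_eq_toFinset_card']

theorem Set.two_mul_ncard_sep_even {α : Type*} [Fintype α] (s : Set α) (m : α → ℕ) :
    2 * ({x ∈ s | Even (m x)}.ncard : ℤ) =
      s.ncard + ∑ x, s.indicator (fun x ↦ (-1 : ℤ) ^ m x) x := by
  rw [← Set.sum_indicator_one_eq_ncard, ← Set.sum_indicator_one_eq_ncard, mul_sum,
    ← sum_add_distrib]
  refine sum_congr rfl fun x _ ↦ ?_
  by_cases hx : x ∈ s <;> rcases Nat.even_or_odd (m x) with hm | hm <;>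
    simp [hx, hm, hm.neg_one_pow]

theorem prod_ite_eq_neg_one_pow_hammingNorm {ι R β : Type*} [Fintype ι] [CommRing R] [Zero β]
    [DecidableEq β] (w : ι → β) :
    ∏ i, (if w i = 0 then (1 : R) else -1) = (-1) ^ hammingNorm w := by
  rw [prod_ite, prod_const_one, one_mul, prod_const, hammingNorm]

section PoissonSummation

variable {F R ι : Type*} [CommRing F] [CommRing R] [Fintype ι] {ψ : AddChar F R}

def dualCode (C : Submodule F (ι → F)) : Set (ι → F) := {w | ∀ v ∈ C, v ⬝ᵥ w = 0}

theorem sum_addChar_dotProduct [IsDomain R] (hψ : ψ.IsPrimitive) (C : Submodule F (ι → F))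
    [Fintype C] (w : ι → F) :
    ∑ v : C, ψ ((v : ι → F) ⬝ᵥ w) =
      (dualCode C).indicator (fun _ ↦ (Fintype.card C : R)) w := by
  classical
  let φ : AddChar C R := ψ.compAddMonoidHom
    (AddMonoidHom.mk' (fun v : C ↦ (v : ι → F) ⬝ᵥ w) fun u v ↦ add_dotProduct _ _ _)
  have hφ : φ = 0 ↔ w ∈ dualCode C := by
    refine ⟨fun h v hv ↦ ?_, fun h ↦ AddChar.eq_zero_iff.2 fun v ↦ ?_⟩
    · by_contra ha
      obtain ⟨x, hx⟩ := AddChar.ne_one_iff.1 (hψ ha)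
      have := AddChar.eq_zero_iff.1 h ⟨x • v, C.smul_mem x hv⟩
      exact hx (by simpa [φ, AddChar.mulShift_apply, mul_comm] using this)
    · simp [φ, h v v.2]
  rw [show ∑ v : C, ψ ((v : ι → F) ⬝ᵥ w) = ∑ v, φ v from rfl, AddChar.sum_eq_ite,
    Set.indicator_apply]
  exact if_congr hφ rfl rfl

variable [Fintype F] [DecidableEq ι]

theorem sum_prod_mul_addChar_dotProduct (g : F → R) (v : ι → F) :
    ∑ w : ι → F, (∏ i, g (w i)) * ψ (v ⬝ᵥ w) = ∏ i, ∑ b, g b * ψ (v i * b) := by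
  rw [Fintype.prod_sum]
  refine sum_congr rfl fun w _ ↦ ?_
  rw [dotProduct, AddChar.map_sum_eq_prod, ← prod_mul_distrib]

variable [IsDomain R]

theorem sum_addChar_mul [DecidableEq F] (hψ : ψ.IsPrimitive) (a : F) :
    ∑ b, ψ (a * b) = if a = 0 then (Fintype.card F : R) else 0 := by
  simp_rw [mul_comm a]
  exact_mod_cast AddChar.sum_mulShift a hψ

/-- Poisson summation for a code and its dual. -/
theorem card_mul_sum_indicator_dualCode (hψ : ψ.IsPrimitive) (C : Submodule F (ι → F))
    [Fintype C] (f : (ι → F) → R) :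
    Fintype.card C * ∑ w, (dualCode C).indicator f w =
      ∑ v : C, ∑ w, f w * ψ ((v : ι → F) ⬝ᵥ w) := by
  simp_rw [sum_comm (γ := C), ← mul_sum, sum_addChar_dotProduct hψ, mul_sum]
  refine sum_congr rfl fun w _ ↦ ?_
  by_cases hw : w ∈ dualCode C <;> simp [hw, mul_comm]

theorem card_mul_sum_indicator_prod_dualCode (hψ : ψ.IsPrimitive) (C : Submodule F (ι → F))
    [Fintype C] (g : F → R) :
    Fintype.card C * ∑ w, (dualCode C).indicator (fun w ↦ ∏ i, g (w i)) w =
      ∑ v : C, ∏ i, ∑ b, g b * ψ ((v : ι → F) i * b) := by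
  simp_rw [card_mul_sum_indicator_dualCode hψ, sum_prod_mul_addChar_dotProduct]

theorem card_mul_ncard_dualCode [CharZero R] (hψ : ψ.IsPrimitive) (C : Submodule F (ι → F))
    [Fintype C] : Fintype.card C * (dualCode C).ncard = Fintype.card F ^ Fintype.card ι := by
  classical
  have h := card_mul_sum_indicator_prod_dualCode hψ C (fun _ ↦ 1)
  have hfourier (v : C) :
      ∏ i, ∑ b, ψ ((v : ι → F) i * b) =
        if v = 0 then (Fintype.card F : R) ^ Fintype.card ι else 0 := by
    simp [sum_addChar_mul hψ, Fintype.prod_ite_zero, ← funext_iff, ← Pi.zero_def]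
  simp only [prod_const_one, one_mul, hfourier, Fintype.sum_ite_eq',
    Set.sum_indicator_one_eq_ncard] at h
  exact_mod_cast h

theorem sum_ite_mul_addChar_mul [DecidableEq F] (hψ : ψ.IsPrimitive) (a : F) :
    ∑ b, (if b = 0 then (1 : R) else -1) * ψ (a * b) =
      2 - if a = 0 then (Fintype.card F : R) else 0 := by
  have (b : F) : (if b = 0 then (1 : R) else -1) * ψ (a * b) =
      (if b = 0 then 2 else 0) - ψ (a * b) := by
    split_ifs with hb
    · rw [hb, mul_zero, AddChar.map_zero_eq_one]
      norm_num
    · ring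
  simp_rw [this, sum_sub_distrib, Fintype.sum_ite_eq', sum_addChar_mul hψ]

theorem sum_indicator_neg_one_pow_hammingNorm_dualCode [DecidableEq F] [CharZero R]
    (hF : Fintype.card F = 4) (hψ : ψ.IsPrimitive) (C : Submodule F (ι → F)) [Fintype C]
    (heven : ∀ v ∈ C, Even (hammingNorm v)) :
    ∑ w, (dualCode C).indicator (fun w ↦ (-1 : R) ^ hammingNorm w) w =
      (-2) ^ Fintype.card ι := by
  have h := card_mul_sum_indicator_prod_dualCode hψ C (fun b ↦ if b = 0 then (1 : R) else -1)
  have hsign (a : F) : ∑ b, (if b = 0 then (1 : R) else -1) * ψ (a * b) =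
      -2 * if a = 0 then 1 else -1 := by
    rw [sum_ite_mul_addChar_mul hψ, hF]
    split_ifs <;> norm_num
  have hfourier (v : C) :
      ∏ i, ∑ b, (if b = 0 then (1 : R) else -1) * ψ ((v : ι → F) i * b) =
        (-2) ^ Fintype.card ι := by
    rw [prod_congr rfl fun i _ ↦ hsign _, prod_mul_distrib, prod_const, card_univ,
      prod_ite_eq_neg_one_pow_hammingNorm, (heven v v.2).neg_one_pow, mul_one]
  simp only [prod_ite_eq_neg_one_pow_hammingNorm, hfourier, sum_const, card_univ,
    nsmul_eq_mul] at h
  exact mul_left_cancel₀ (by exact_mod_cast Fintype.card_ne_zero) h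

end PoissonSummation

theorem exists_isPrimitive_addChar_int (K : Type*) [Field K] [Finite K] [Algebra (ZMod 2) K] :
    ∃ ψ : AddChar K ℤ, ψ.IsPrimitive := by
  obtain ⟨x, hx⟩ := Algebra.trace_surjective (ZMod 2) K 1
  refine ⟨(AddChar.zmodChar 2 (ζ := (-1 : ℤ)) (by norm_num)).compAddMonoidHom
    (Algebra.trace (ZMod 2) K).toAddMonoidHom, AddChar.IsPrimitive.of_ne_one ?_⟩
  rw [AddChar.ne_one_iff]
  exact ⟨x, by simp [hx, AddChar.zmodChar_apply, ZMod.val_one]⟩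

theorem wt_eq_hammingNorm [DecidableEq F₄] {n : ℕ} (v : Fin n → F₄) : wt v = hammingNorm v := by
  rw [wt, hammingNorm, ← Set.ncard_coe_finset, coe_filter]
  simp

theorem dualSet_eq_dualCode {n : ℕ} (C : Submodule F₄ (Fin n → F₄)) :
    dualSet C = dualCode (ι := Fin n) C :=
  rfl

/-- Lemma 2: if `C` is an even linear `[n,k]` code over F₄, then the number of
even-weight vectors in the dual code `C^⊥` equals `½(4^{n-k} + (-2)^n)`. -/
theorem num_even_in_dual (n k : ℕ)
    (C : Submodule F₄ (Fin n → F₄))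
    (heven : ∀ v ∈ C, Even (wt v))
    (hdim : Module.finrank F₄ C = k) :
    (2 : ℤ) * ({w ∈ dualSet C | Even (wt w)}.ncard : ℤ) = 4 ^ (n - k) + (-2) ^ n := by
  classical
  have : Fintype F₄ := Fintype.ofFinite _
  have : Fintype C := Fintype.ofFinite _
  have hF : Fintype.card F₄ = 4 := by
    rw [← Nat.card_eq_fintype_card, GaloisField.card 2 2 two_ne_zero]
    norm_num
  have hC : Fintype.card C = 4 ^ k := by rw [Module.card_eq_pow_finrank (K := F₄), hF, hdim]
  have hkn : k ≤ n := hdim ▸ (Submodule.finrank_le C).trans_eq (Module.finrank_fin_fun F₄)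
  obtain ⟨ψ, hψ⟩ := exists_isPrimitive_addChar_int F₄
  have hcard : (dualSet C).ncard = 4 ^ (n - k) := by
    have h := card_mul_ncard_dualCode hψ C
    rw [hC, hF, Fintype.card_fin, ← dualSet_eq_dualCode] at h
    refine Nat.eq_of_mul_eq_mul_left (by positivity : 0 < 4 ^ k) ?_
    rw [h, ← pow_add, Nat.add_sub_cancel' hkn]
  have hsign : ∑ w, (dualSet C).indicator (fun w ↦ (-1 : ℤ) ^ wt w) w = (-2) ^ n := by
    simp_rw [wt_eq_hammingNorm] at heven ⊢
    simpa [dualSet_eq_dualCode] using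
      sum_indicator_neg_one_pow_hammingNorm_dualCode hF hψ C heven
  rw [Set.two_mul_ncard_sep_even, hcard, hsign]
  norm_num
end

section
/- Let n ≥ 1 and k ≥ 1 be integers. For any two nonzero vectors u, v ∈ F₄ⁿ of even Hamming weight, the number of codes C ∈ S_{n,k} containing u equals the number of codes C ∈ S_{n,k} containing v; i.e., #{C ∈ S_{n,k} : u ∈ C} = #{C ∈ S_{n,k} : v ∈ C}. -/
local notation "F₄" => GaloisField 2 2

/-- `Snk n k` is the set of all even linear `[n,k]` codes over F₄. -/
def Snk (n k : ℕ) : Set (Submodule F₄ (Fin n → F₄)) :=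
  {C | Module.finrank F₄ C = k ∧ ∀ v ∈ C, Even (wt v)}

/-! ### Auxiliary material -/

noncomputable instance : Fintype F₄ := Fintype.ofFinite _
noncomputable instance : DecidableEq F₄ := Classical.decEq _

lemma F4_card : Fintype.card F₄ = 4 := by
  have := GaloisField.card 2 2 (by norm_num)
  simpa [Nat.card_eq_fintype_card] using this

lemma cube_eq_one {x : F₄} (hx : x ≠ 0) : x ^ 3 = 1 := by
  have := FiniteField.pow_card_sub_one_eq_one x hx
  rw [F4_card] at this; norm_num at this; exact this

lemma two_eq_zero : (2 : F₄) = 0 := by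
  exact_mod_cast CharP.cast_eq_zero F₄ 2

lemma exists_omega : ∃ ω : F₄, ω ^ 2 + ω + 1 = 0 := by
  obtain ⟨x, hx0, hx1⟩ : ∃ x : F₄, x ≠ 0 ∧ x ≠ 1 := by
    by_contra h
    push_neg at h
    have hsub : (Finset.univ : Finset F₄) ⊆ {(0 : F₄), 1} := by
      intro x _
      by_cases h0 : x = 0
      · simp [h0]
      · simp [h x h0]
    have h1 := Finset.card_le_card hsub
    have h2 : ({(0:F₄), 1} : Finset F₄).card ≤ 2 :=
      le_trans (Finset.card_insert_le _ _) (by simp)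
    rw [Finset.card_univ, F4_card] at h1
    omega
  have hx3 : x ^ 3 = 1 := cube_eq_one hx0
  have hfac : (x - 1) * (x ^ 2 + x + 1) = 0 := by linear_combination hx3
  rcases mul_eq_zero.mp hfac with h | h
  · exact absurd (by linear_combination h) hx1
  · exact ⟨x, h⟩

/-- the "norm" that detects evenness of the weight -/
noncomputable def Qv {n : ℕ} (x : Fin n → F₄) : F₄ := ∑ i, (x i) ^ 3

noncomputable def supp {n : ℕ} (x : Fin n → F₄) : Finset (Fin n) :=
  Finset.univ.filter (fun i => x i ≠ 0)

lemma wt_eq_card {n : ℕ} (x : Fin n → F₄) : wt x = (supp x).card := by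
  rw [wt, ← Set.ncard_coe_finset]
  congr 1
  ext i
  simp [supp]

lemma Qv_eq_cast {n : ℕ} (x : Fin n → F₄) : Qv x = (wt x : F₄) := by
  rw [wt_eq_card, Qv]
  rw [show (∑ i, (x i) ^ 3) = ∑ i, (if x i ≠ 0 then (1:F₄) else 0) from
    Finset.sum_congr rfl fun i _ => by
      by_cases h : x i = 0 <;> simp [h, cube_eq_one]]
  rw [Finset.sum_boole]
  rfl

lemma even_wt_iff {n : ℕ} (x : Fin n → F₄) : Even (wt x) ↔ Qv x = 0 := by
  rw [Qv_eq_cast, CharP.cast_eq_zero_iff F₄ 2, Nat.even_iff, Nat.dvd_iff_mod_eq_zero]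

/-- `Pres g` : `g` preserves the norm `Qv`. -/
def Pres {n : ℕ} (g : (Fin n → F₄) ≃ₗ[F₄] (Fin n → F₄)) : Prop := ∀ x, Qv (g x) = Qv x

lemma Pres.trans {n : ℕ} {g h : (Fin n → F₄) ≃ₗ[F₄] (Fin n → F₄)} (hg : Pres g) (hh : Pres h) :
    Pres (g.trans h) := fun x => by
  rw [LinearEquiv.trans_apply, hh, hg]

lemma Pres.symm {n : ℕ} {g : (Fin n → F₄) ≃ₗ[F₄] (Fin n → F₄)} (hg : Pres g) : Pres g.symm :=
  fun x => by conv_rhs => rw [← g.apply_symm_apply x, hg]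

/-- characteristic vector of a finset -/
noncomputable def chi {n : ℕ} (s : Finset (Fin n)) : Fin n → F₄ := fun i => if i ∈ s then 1 else 0

/-- permutations of coordinates preserve `Qv` and act transitively on characteristic vectors of
finsets of given cardinality. -/
lemma exists_perm_move {n : ℕ} (s t : Finset (Fin n)) (h : s.card = t.card) :
    ∃ g, Pres g ∧ g (chi s) = chi t := by
  classical
  have hcard : Fintype.card {x // x ∈ t} = Fintype.card {x // x ∈ s} := by
    simp [Fintype.card_coe, h]
  let e : {x : Fin n // x ∈ t} ≃ {x : Fin n // x ∈ s} := Fintype.equivOfCardEq hcard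
  let σ : Equiv.Perm (Fin n) := e.extendSubtype
  refine ⟨LinearEquiv.funCongrLeft F₄ F₄ σ, ?_, ?_⟩
  · intro x
    show (∑ i, ((x ∘ σ) i) ^ 3) = ∑ i, (x i) ^ 3
    exact Equiv.sum_comp σ (fun i => (x i) ^ 3)
  · funext i
    show chi s (σ i) = chi t i
    by_cases hi : i ∈ t
    · simp [chi, σ, e.extendSubtype_mem i hi, hi]
    · simp [chi, σ, e.extendSubtype_not_mem i hi, hi]

/-- scaling to the characteristic vector of the support -/
lemma exists_scale {n : ℕ} (u : Fin n → F₄) :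
    ∃ g, Pres g ∧ g u = chi (supp u) := by
  classical
  set c : Fin n → F₄ := fun i => if u i = 0 then 1 else (u i)⁻¹ with hc
  have hc0 : ∀ i, c i ≠ 0 := by
    intro i
    by_cases h : u i = 0 <;> simp [hc, h, inv_ne_zero]
  refine ⟨LinearEquiv.ofLinear
    (LinearMap.pi fun i => c i • LinearMap.proj i)
    (LinearMap.pi fun i => (c i)⁻¹ • LinearMap.proj i) ?_ ?_, ?_, ?_⟩
  · ext x i
    simp [← mul_assoc, mul_inv_cancel₀ (hc0 i)]
  · ext x i
    simp [← mul_assoc, inv_mul_cancel₀ (hc0 i)]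
  · intro x
    show (∑ i, (c i * x i) ^ 3) = _
    refine Finset.sum_congr rfl fun i _ => ?_
    rw [mul_pow, cube_eq_one (hc0 i), one_mul]
  · funext i
    show c i * u i = chi (supp u) i
    by_cases h : u i = 0
    · simp [chi, supp, hc, h]
    · simp [chi, supp, hc, h, inv_mul_cancel₀ h]

/-- linear map acting by a 4×4 matrix on the first 4 coordinates -/
noncomputable def blF {n : ℕ} (h4 : 4 ≤ n) (A : Matrix (Fin 4) (Fin 4) F₄) :
    (Fin n → F₄) →ₗ[F₄] (Fin n → F₄) where
  toFun x j := if h : (j : ℕ) < 4 then ∑ s : Fin 4, A ⟨j.1, h⟩ s * x (Fin.castLE h4 s) else x j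
  map_add' x y := by
    funext j
    by_cases h : (j : ℕ) < 4
    · simp only [dif_pos h, Pi.add_apply, mul_add, Finset.sum_add_distrib]
    · simp [dif_neg h]
  map_smul' a x := by
    funext j
    by_cases h : (j : ℕ) < 4
    · simp only [dif_pos h, Pi.smul_apply, smul_eq_mul, RingHom.id_apply, Finset.mul_sum]
      exact Finset.sum_congr rfl fun s _ => by ring
    · simp [dif_neg h]

lemma blF_apply_lt {n : ℕ} (h4 : 4 ≤ n) (A : Matrix (Fin 4) (Fin 4) F₄) (x : Fin n → F₄)
    (j : Fin n) (h : (j : ℕ) < 4) :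
    blF h4 A x j = ∑ s : Fin 4, A ⟨j.1, h⟩ s * x (Fin.castLE h4 s) := by
  simp [blF, dif_pos h]

lemma blF_apply_ge {n : ℕ} (h4 : 4 ≤ n) (A : Matrix (Fin 4) (Fin 4) F₄) (x : Fin n → F₄)
    (j : Fin n) (h : ¬ (j : ℕ) < 4) : blF h4 A x j = x j := by
  simp [blF, dif_neg h]

lemma blF_apply_castLE {n : ℕ} (h4 : 4 ≤ n) (A : Matrix (Fin 4) (Fin 4) F₄) (x : Fin n → F₄)
    (s : Fin 4) :
    blF h4 A x (Fin.castLE h4 s) = ∑ t : Fin 4, A s t * x (Fin.castLE h4 t) := by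
  rw [blF_apply_lt h4 A x _ (by simpa using s.2)]
  congr 1

lemma blF_comp {n : ℕ} (h4 : 4 ≤ n) {A B : Matrix (Fin 4) (Fin 4) F₄} (hBA : B * A = 1)
    (x : Fin n → F₄) : blF h4 B (blF h4 A x) = x := by
  funext j
  by_cases h : (j : ℕ) < 4
  · rw [blF_apply_lt h4 B _ j h]
    have : ∀ s : Fin 4, blF h4 A x (Fin.castLE h4 s) = ∑ t : Fin 4, A s t * x (Fin.castLE h4 t) :=
      blF_apply_castLE h4 A x
    calc (∑ s : Fin 4, B ⟨j.1, h⟩ s * blF h4 A x (Fin.castLE h4 s))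
        = ∑ s : Fin 4, ∑ t : Fin 4, B ⟨j.1, h⟩ s * (A s t * x (Fin.castLE h4 t)) := by
          refine Finset.sum_congr rfl fun s _ => ?_
          rw [this s, Finset.mul_sum]
      _ = ∑ t : Fin 4, (∑ s : Fin 4, B ⟨j.1, h⟩ s * A s t) * x (Fin.castLE h4 t) := by
          rw [Finset.sum_comm]
          refine Finset.sum_congr rfl fun t _ => ?_
          rw [Finset.sum_mul]
          exact Finset.sum_congr rfl fun s _ => by ring
      _ = ∑ t : Fin 4, (if (⟨j.1, h⟩ : Fin 4) = t then (1:F₄) else 0) * x (Fin.castLE h4 t) := by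
          refine Finset.sum_congr rfl fun t _ => ?_
          rw [show (∑ s : Fin 4, B ⟨j.1, h⟩ s * A s t) = (B * A) ⟨j.1, h⟩ t from
            (Matrix.mul_apply).symm, hBA, Matrix.one_apply]
      _ = x j := by
          simp only [ite_mul, one_mul, zero_mul, Finset.sum_ite_eq, Finset.mem_univ, if_true]
          exact congrArg x (Fin.ext rfl)
  · rw [blF_apply_ge h4 B _ j h, blF_apply_ge h4 A x j h]

noncomputable def blE {n : ℕ} (h4 : 4 ≤ n) (A B : Matrix (Fin 4) (Fin 4) F₄)
    (hAB : A * B = 1) (hBA : B * A = 1) : (Fin n → F₄) ≃ₗ[F₄] (Fin n → F₄) :=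
  LinearEquiv.ofLinear (blF h4 A) (blF h4 B)
    (LinearMap.ext fun x => blF_comp h4 hAB x)
    (LinearMap.ext fun x => blF_comp h4 hBA x)

lemma blE_apply {n : ℕ} (h4 : 4 ≤ n) (A B : Matrix (Fin 4) (Fin 4) F₄)
    (hAB : A * B = 1) (hBA : B * A = 1) (x : Fin n → F₄) :
    blE h4 A B hAB hBA x = blF h4 A x := rfl

/-- key 4-dimensional computation: a "unitary" matrix preserves the norm -/
lemma key4 {A : Matrix (Fin 4) (Fin 4) F₄}
    (hA : ∀ s u, (∑ t, A t s * (A t u) ^ 2) = if s = u then (1:F₄) else 0)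
    (y : Fin 4 → F₄) : ∑ t, (∑ s, A t s * y s) ^ 3 = ∑ s, (y s) ^ 3 := by
  have h3 : ∀ t, (∑ s, A t s * y s) ^ 3 = ∑ s, ∑ u, A t s * (A t u) ^ 2 * (y s * (y u) ^ 2) := by
    intro t
    have hsq : (∑ s, A t s * y s) ^ 2 = ∑ u, (A t u) ^ 2 * (y u) ^ 2 := by
      rw [CharTwo.sum_sq]
      exact Finset.sum_congr rfl fun u _ => by ring
    calc (∑ s, A t s * y s) ^ 3 = (∑ s, A t s * y s) * (∑ s, A t s * y s) ^ 2 := by ring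
      _ = (∑ s, A t s * y s) * (∑ u, (A t u) ^ 2 * (y u) ^ 2) := by rw [hsq]
      _ = ∑ s, ∑ u, A t s * (A t u) ^ 2 * (y s * (y u) ^ 2) := by
          rw [Finset.sum_mul_sum]
          exact Finset.sum_congr rfl fun s _ => Finset.sum_congr rfl fun u _ => by ring
  calc (∑ t, (∑ s, A t s * y s) ^ 3)
      = ∑ t, ∑ s, ∑ u, A t s * (A t u) ^ 2 * (y s * (y u) ^ 2) :=
        Finset.sum_congr rfl fun t _ => h3 t
    _ = ∑ s, ∑ u, (∑ t, A t s * (A t u) ^ 2) * (y s * (y u) ^ 2) := by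
        rw [Finset.sum_comm]
        refine Finset.sum_congr rfl fun s _ => ?_
        rw [Finset.sum_comm]
        refine Finset.sum_congr rfl fun u _ => ?_
        rw [Finset.sum_mul]
    _ = ∑ s, ∑ u, (if s = u then (1:F₄) else 0) * (y s * (y u) ^ 2) :=
        Finset.sum_congr rfl fun s _ => Finset.sum_congr rfl fun u _ => by rw [hA]
    _ = ∑ s, (y s) ^ 3 := by
        refine Finset.sum_congr rfl fun s _ => ?_
        simp only [ite_mul, one_mul, zero_mul, Finset.sum_ite_eq, Finset.mem_univ, if_true]
        ring

lemma filter_lt_four {n : ℕ} (h4 : 4 ≤ n) :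
    Finset.univ.filter (fun j : Fin n => (j : ℕ) < 4) =
      Finset.univ.map ⟨Fin.castLE h4, Fin.castLE_injective h4⟩ := by
  ext j
  rw [Finset.mem_filter, Finset.mem_map]
  constructor
  · rintro ⟨-, hj⟩
    exact ⟨⟨j.1, hj⟩, Finset.mem_univ _, Fin.ext rfl⟩
  · rintro ⟨s, -, rfl⟩
    exact ⟨Finset.mem_univ _, by simpa using s.2⟩

lemma pres_blF {n : ℕ} (h4 : 4 ≤ n) {A : Matrix (Fin 4) (Fin 4) F₄}
    (hA : ∀ s u, (∑ t, A t s * (A t u) ^ 2) = if s = u then (1:F₄) else 0)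
    (x : Fin n → F₄) : Qv (blF h4 A x) = Qv x := by
  rw [Qv, Qv, ← Finset.sum_filter_add_sum_filter_not Finset.univ (fun j : Fin n => (j:ℕ) < 4),
    ← Finset.sum_filter_add_sum_filter_not Finset.univ (fun j : Fin n => (j:ℕ) < 4)
      (fun j => (x j) ^ 3)]
  congr 1
  · rw [filter_lt_four h4, Finset.sum_map, Finset.sum_map]
    simp only [Function.Embedding.coeFn_mk]
    calc (∑ s : Fin 4, (blF h4 A x (Fin.castLE h4 s)) ^ 3)
        = ∑ s : Fin 4, (∑ t : Fin 4, A s t * x (Fin.castLE h4 t)) ^ 3 :=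
          Finset.sum_congr rfl fun s _ => by rw [blF_apply_castLE]
      _ = ∑ t : Fin 4, (x (Fin.castLE h4 t)) ^ 3 := key4 hA _
  · refine Finset.sum_congr rfl fun j hj => ?_
    rw [blF_apply_ge h4 A x j (by simpa using (Finset.mem_filter.mp hj).2)]

lemma exists_good_matrix : ∃ A B : Matrix (Fin 4) (Fin 4) F₄,
    A * B = 1 ∧ B * A = 1 ∧
    (∀ s u, (∑ t, A t s * (A t u) ^ 2) = if s = u then (1:F₄) else 0) ∧
    (∀ t : Fin 4, (∑ s, A t s) = if (t:ℕ) < 2 then 1 else 0) := by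
  obtain ⟨ω, hω⟩ := exists_omega
  have h2 : (2:F₄) = 0 := two_eq_zero
  set A : Matrix (Fin 4) (Fin 4) F₄ :=
    !![0, 1, 1, 1; 1, 0, 0, 0; 0, 1, ω, ω + 1; 0, 1, ω + 1, ω] with hA
  have key : ∀ s u : Fin 4, (∑ t, A t s * (A t u) ^ 2) = if s = u then (1:F₄) else 0 := by
    intro s u
    fin_cases s <;> fin_cases u <;>
      simp [hA, Fin.sum_univ_four, Matrix.vecHead, Matrix.vecTail] <;>
      first
        | linear_combination 3*hω + (ω^3 - 1)*h2
        | linear_combination 3*hω + (ω^3 - ω - 1)*h2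
        | linear_combination (ω^2 + ω + 1)*h2
        | linear_combination (ω + 1)*h2
        | linear_combination h2
  set B : Matrix (Fin 4) (Fin 4) F₄ := Matrix.of (fun s t => (A t s) ^ 2) with hB
  have hBA : B * A = 1 := by
    ext s u
    rw [Matrix.mul_apply, Matrix.one_apply]
    calc (∑ t, B s t * A t u) = ∑ t, A t u * (A t s) ^ 2 :=
          Finset.sum_congr rfl fun t _ => by rw [hB]; exact mul_comm _ _
      _ = if u = s then 1 else 0 := key u s
      _ = if s = u then 1 else 0 := by simp [eq_comm]
  have hAB : A * B = 1 := mul_eq_one_comm.mpr hBA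
  have hrow : ∀ t : Fin 4, (∑ s, A t s) = if (t:ℕ) < 2 then 1 else 0 := by
    intro t
    fin_cases t <;>
      simp [hA, Fin.sum_univ_four, Matrix.vecHead, Matrix.vecTail] <;>
      first
        | linear_combination h2
        | linear_combination (ω + 1)*h2
  exact ⟨A, B, hAB, hBA, key, hrow⟩

/-- the "standard" finset of the first `w` indices -/
noncomputable def stdF {n : ℕ} (w : ℕ) (hw : w ≤ n) : Finset (Fin n) :=
  (Finset.range w).attachFin (fun m hm => lt_of_lt_of_le (Finset.mem_range.mp hm) hw)

lemma mem_stdF {n w : ℕ} (hw : w ≤ n) (i : Fin n) : i ∈ stdF w hw ↔ (i : ℕ) < w := by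
  simp [stdF, Finset.mem_attachFin]

lemma card_stdF {n w : ℕ} (hw : w ≤ n) : (stdF w hw : Finset (Fin n)).card = w := by
  simp [stdF, Finset.card_attachFin]

/-- comparing a `Fin` with an explicitly given element -/
lemma fin_eq_mk_iff {n a : ℕ} (h : a < n) (j : Fin n) : (j = ⟨a, h⟩) ↔ (j : ℕ) = a := by
  constructor
  · intro heq
    rw [heq]
  · intro h'
    exact Fin.ext h'

/-- the block step: lowers the weight of a standard characteristic vector by 2 -/
lemma block_step {n : ℕ} (w : ℕ) (hw : w ≤ n) (h4w : 4 ≤ w) :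
    ∃ g t, Pres g ∧ g (chi (stdF w hw)) = chi t ∧ (t : Finset (Fin n)).card = w - 2 := by
  have h4n : 4 ≤ n := h4w.trans hw
  have h2n : (2 : ℕ) < n := by omega
  have h3n : (3 : ℕ) < n := by omega
  obtain ⟨A, B, hAB, hBA, key, hrow⟩ := exists_good_matrix
  refine ⟨blE h4n A B hAB hBA, ((stdF w hw).erase ⟨2, h2n⟩).erase ⟨3, h3n⟩,
    pres_blF h4n key, ?_, ?_⟩
  · funext j
    rw [blE_apply]
    have hmem_iff : j ∈ ((stdF w hw).erase ⟨2, h2n⟩).erase ⟨3, h3n⟩ ↔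
        ((j:ℕ) ≠ 3 ∧ (j:ℕ) ≠ 2 ∧ (j:ℕ) < w) := by
      rw [Finset.mem_erase, Finset.mem_erase, mem_stdF, Ne, Ne,
        fin_eq_mk_iff h3n j, fin_eq_mk_iff h2n j]
    by_cases hj : (j : ℕ) < 4
    · rw [blF_apply_lt h4n A _ j hj]
      have hone : ∀ s : Fin 4, chi (stdF w hw) (Fin.castLE h4n s) = 1 := by
        intro s
        have hs : (s : ℕ) < w := by
          have h := s.2
          omega
        simp [chi, mem_stdF, hs]
      rw [Finset.sum_congr rfl fun s _ => by rw [hone s, mul_one], hrow]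
      have hcoe : ((⟨j.1, hj⟩ : Fin 4) : ℕ) = (j : ℕ) := rfl
      rw [hcoe]
      by_cases h2j : (j : ℕ) < 2
      · rw [if_pos h2j]
        have hmem : j ∈ ((stdF w hw).erase ⟨2, h2n⟩).erase ⟨3, h3n⟩ :=
          hmem_iff.mpr ⟨by omega, by omega, by omega⟩
        simp [chi, hmem]
      · rw [if_neg h2j]
        have hmem : j ∉ ((stdF w hw).erase ⟨2, h2n⟩).erase ⟨3, h3n⟩ := by
          rw [hmem_iff]
          omega
        simp [chi, hmem]
    · rw [blF_apply_ge h4n A _ j hj]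
      have : (j ∈ ((stdF w hw).erase ⟨2, h2n⟩).erase ⟨3, h3n⟩) ↔ ((j : ℕ) < w) := by
        rw [hmem_iff]
        omega
      simp only [chi, mem_stdF, this]
  · have h3 : (⟨3, h3n⟩ : Fin n) ∈ (stdF w hw).erase ⟨2, h2n⟩ := by
      rw [Finset.mem_erase, mem_stdF, Ne, fin_eq_mk_iff h2n]
      refine ⟨?_, ?_⟩
      · show ¬(3:ℕ) = 2
        omega
      · show (3:ℕ) < w
        omega
    have h2 : (⟨2, h2n⟩ : Fin n) ∈ (stdF w hw : Finset (Fin n)) := by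
      rw [mem_stdF]
      show (2:ℕ) < w
      omega
    rw [Finset.card_erase_of_mem h3, Finset.card_erase_of_mem h2, card_stdF]
    omega

/-- reduction of standard vectors of even weight to the standard weight-2 vector -/
lemma reduce_std {n : ℕ} : ∀ w, ∀ hw : w ≤ n, Even w → ∀ h2w : 2 ≤ w,
    ∃ g, Pres g ∧ g (chi (stdF w hw)) = chi (stdF 2 (le_trans h2w hw)) := by
  intro w
  induction w using Nat.strong_induction_on with
  | _ w ih =>
    intro hw he h2w
    rcases eq_or_lt_of_le h2w with heq | hlt
    · refine ⟨LinearEquiv.refl _ _, fun x => rfl, ?_⟩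
      subst heq
      rfl
    · have h4w : 4 ≤ w := by
        rcases he with ⟨m, rfl⟩
        omega
      obtain ⟨g1, t, hp1, hg1, hcard⟩ := block_step w hw h4w
      obtain ⟨g2, hp2, hg2⟩ := exists_perm_move t (stdF (w - 2) (by omega)) (by
        rw [hcard, card_stdF])
      obtain ⟨g3, hp3, hg3⟩ := ih (w - 2) (by omega) (by omega) (by
        rcases he with ⟨m, rfl⟩
        exact ⟨m - 1, by omega⟩) (by
        rcases he with ⟨m, rfl⟩
        omega)
      refine ⟨(g1.trans g2).trans g3, (hp1.trans hp2).trans hp3, ?_⟩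
      rw [LinearEquiv.trans_apply, LinearEquiv.trans_apply, hg1, hg2, hg3]

/-- any nonzero even-weight vector can be moved to the standard weight-2 vector by a
norm-preserving linear automorphism. -/
lemma reduce_any {n : ℕ} (u : Fin n → F₄) (hu : u ≠ 0) (hue : Even (wt u)) (h2n : 2 ≤ n) :
    ∃ g, Pres g ∧ g u = chi (stdF 2 h2n) := by
  obtain ⟨g1, hp1, hg1⟩ := exists_scale u
  set w := (supp u).card with hwdef
  have hwn : w ≤ n := by
    have := Finset.card_le_univ (supp u)
    simpa using this
  have hew : Even w := by
    rw [hwdef, ← wt_eq_card]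
    exact hue
  have h2w : 2 ≤ w := by
    have hpos : 0 < w := by
      rw [hwdef, Finset.card_pos]
      obtain ⟨i, hi⟩ := Function.ne_iff.mp hu
      have hi' : u i ≠ 0 := by simpa using hi
      exact ⟨i, by simp [supp, hi']⟩
    rcases hew with ⟨m, hm⟩
    omega
  obtain ⟨g2, hp2, hg2⟩ := exists_perm_move (supp u) (stdF w hwn) (by rw [card_stdF])
  obtain ⟨g3, hp3, hg3⟩ := reduce_std w hwn hew h2w
  refine ⟨(g1.trans g2).trans g3, (hp1.trans hp2).trans hp3, ?_⟩
  rw [LinearEquiv.trans_apply, LinearEquiv.trans_apply, hg1, hg2, hg3]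

/-- norm-preserving automorphisms map `Snk` into itself. -/
lemma map_mem_Snk {n k : ℕ} {g : (Fin n → F₄) ≃ₗ[F₄] (Fin n → F₄)} (hg : Pres g)
    {C : Submodule F₄ (Fin n → F₄)} (hC : C ∈ Snk n k) :
    Submodule.map (g : (Fin n → F₄) →ₗ[F₄] (Fin n → F₄)) C ∈ Snk n k := by
  constructor
  · rw [LinearEquiv.finrank_map_eq g C]
    exact hC.1
  · rintro x ⟨y, hy, rfl⟩
    rw [even_wt_iff]
    show Qv (g y) = 0
    rw [hg y, ← even_wt_iff]
    exact hC.2 y hy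

/-- Lemma 4: for any two nonzero even-weight vectors `u, v ∈ F₄ⁿ`, the number of
codes in `S_{n,k}` containing `u` equals the number containing `v`. -/
theorem num_codes_containing_even_vector_const (n k : ℕ)
    (hn : 1 ≤ n) (hk : 1 ≤ k)
    (u v : Fin n → F₄) (hu : u ≠ 0) (hv : v ≠ 0)
    (hue : Even (wt u)) (hve : Even (wt v)) :
    {C ∈ Snk n k | u ∈ C}.ncard = {C ∈ Snk n k | v ∈ C}.ncard := by
  classical
  have h2n : 2 ≤ n := by
    have h1 : wt u ≤ n := by
      rw [wt_eq_card]
      simpa using Finset.card_le_univ (supp u)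
    have h2 : 2 ≤ wt u := by
      have hpos : 0 < wt u := by
        rw [wt_eq_card, Finset.card_pos]
        obtain ⟨i, hi⟩ := Function.ne_iff.mp hu
        have hi' : u i ≠ 0 := by simpa using hi
        exact ⟨i, by simp [supp, hi']⟩
      rcases hue with ⟨m, hm⟩
      omega
    omega
  obtain ⟨gu, hpu, hgu⟩ := reduce_any u hu hue h2n
  obtain ⟨gv, hpv, hgv⟩ := reduce_any v hv hve h2n
  set g : (Fin n → F₄) ≃ₗ[F₄] (Fin n → F₄) := gu.trans gv.symm with hgdef
  have hp : Pres g := hpu.trans hpv.symm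
  have hg : g u = v := by
    rw [hgdef, LinearEquiv.trans_apply, hgu, ← hgv, LinearEquiv.symm_apply_apply]
  set f : Submodule F₄ (Fin n → F₄) ≃o Submodule F₄ (Fin n → F₄) :=
    Submodule.orderIsoMapComap g with hfdef
  have hfapp : ∀ C, f C = Submodule.map (g : (Fin n → F₄) →ₗ[F₄] (Fin n → F₄)) C :=
    fun C => rfl
  have himg : (fun C => f C) '' {C ∈ Snk n k | u ∈ C} = {C ∈ Snk n k | v ∈ C} := by
    ext C
    constructor
    · rintro ⟨C', ⟨hC'snk, hC'u⟩, rfl⟩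
      refine ⟨?_, ?_⟩
      · show f C' ∈ Snk n k
        rw [hfapp]
        exact map_mem_Snk hp hC'snk
      · show v ∈ f C'
        rw [hfapp, ← hg]
        exact Submodule.mem_map_of_mem hC'u
    · intro ⟨hCsnk, hCv⟩
      refine ⟨f.symm C, ⟨?_, ?_⟩, f.apply_symm_apply C⟩
      · have : f.symm C = Submodule.map (g.symm : (Fin n → F₄) →ₗ[F₄] (Fin n → F₄)) C := by
          rw [hfdef, Submodule.orderIsoMapComap_symm_apply]
          exact Submodule.comap_equiv_eq_map_symm _ _
        rw [this]
        exact map_mem_Snk hp.symm hCsnk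
      · have : f.symm C = Submodule.map (g.symm : (Fin n → F₄) →ₗ[F₄] (Fin n → F₄)) C := by
          rw [hfdef, Submodule.orderIsoMapComap_symm_apply]
          exact Submodule.comap_equiv_eq_map_symm _ _
        rw [this]
        have : u = g.symm v := by rw [← hg, LinearEquiv.symm_apply_apply]
        rw [this]
        exact Submodule.mem_map_of_mem hCv
  rw [← himg, Set.ncard_image_of_injective _ f.injective]
end

section
/- Let n ≥ 2 be an even integer and let t be an integer with 1 ≤ t ≤ n. Then Σ_{i=0}^{n/2} C(n,2i) · 3^{2i} · K_t(4; 2i) = 2^{n−1} · C(n,t) · (−3)^t. -/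
/-- The `q`-ary Krawtchouk polynomial `K_t(q;x)` (with parameter `n`), evaluated at a
natural number `x`:  `K_t(q;x) = ∑_{ℓ=0}^{t} (-1)^ℓ C(x,ℓ) C(n-x,t-ℓ) (q-1)^{t-ℓ}`. -/
def kraw (n q t x : ℕ) : ℤ :=
  ∑ l ∈ Finset.range (t + 1),
    (-1 : ℤ) ^ l * (x.choose l) * ((n - x).choose (t - l)) * ((q : ℤ) - 1) ^ (t - l)

/-! The generating function of the Krawtchouk polynomials is
`∑_t K_t(q;x) z^t = (1 - z)^x (1 + (q-1) z)^(n-x)`, so by the binomial theorem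
`∑_x C(n,x) a^x K_t(q;x)` is the `t`-th coefficient of `((a + 1) + (q - 1 - a) z)^n`.
For `q = 4` and `a = ±3` these are `4^n` and `(6z - 2)^n`; adding the two cancels the odd `x`,
and the `t`-th coefficient of the constant `4^n` vanishes for `t ≥ 1`. -/

open Polynomial Finset

theorem coeff_C_mul_X_add_C_pow {R : Type*} [CommSemiring R] (a b : R) (m k : ℕ) :
    ((C a * X + C b) ^ m).coeff k = a ^ k * b ^ (m - k) * m.choose k := by
  have hterm : ∀ j, (C a * X) ^ j * C b ^ (m - j) * (m.choose j : R[X])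
      = C (a ^ j * b ^ (m - j) * m.choose j) * X ^ j := by
    intro j
    rw [← C_eq_natCast, mul_pow, ← C_pow, ← C_pow, C_mul, C_mul]
    ring
  simp only [add_pow, finsetSum_coeff, hterm, coeff_C_mul_X_pow]
  rw [sum_ite_eq]
  split_ifs with hk
  · rfl
  · simp [Nat.choose_eq_zero_of_lt (by simpa using hk : m < k)]

theorem kraw_eq_coeff (n q t x : ℕ) :
    kraw n q t x = ((C (-1) * X + C 1) ^ x * (C ((q : ℤ) - 1) * X + C 1) ^ (n - x)).coeff t := by
  rw [coeff_mul, Nat.sum_antidiagonal_eq_sum_range_succ_mk, kraw]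
  refine sum_congr rfl fun l _ => ?_
  rw [coeff_C_mul_X_add_C_pow, coeff_C_mul_X_add_C_pow]
  ring

theorem sum_choose_mul_pow_mul_kraw (n q t : ℕ) (a : ℤ) :
    ∑ x ∈ range (n + 1), (n.choose x : ℤ) * a ^ x * kraw n q t x
      = n.choose t * ((q : ℤ) - 1 - a) ^ t * (a + 1) ^ (n - t) := by
  have hbinom : ∑ x ∈ range (n + 1), C ((n.choose x : ℤ) * a ^ x) *
      ((C (-1) * X + C 1) ^ x * (C ((q : ℤ) - 1) * X + C 1) ^ (n - x))
      = (C ((q : ℤ) - 1 - a) * X + C (a + 1)) ^ n := by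
    have hsplit : C ((q : ℤ) - 1 - a) * X + C (a + 1)
        = C a * (C (-1) * X + C 1) + (C ((q : ℤ) - 1) * X + C 1) := by
      simp only [C_sub, C_add, C_neg, C_1]
      ring
    rw [hsplit, add_pow]
    refine sum_congr rfl fun x _ => ?_
    rw [← C_eq_natCast, C_mul, C_pow, mul_pow]
    ring
  simp_rw [kraw_eq_coeff, ← coeff_C_mul, ← finsetSum_coeff, hbinom, coeff_C_mul_X_add_C_pow]
  ring

theorem sum_range_two_mul_add_one_eq_sum_even {M : Type*} [AddCommMonoid M] (f : ℕ → M)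
    (hf : ∀ x, Odd x → f x = 0) (m : ℕ) :
    ∑ x ∈ range (2 * m + 1), f x = ∑ i ∈ range (m + 1), f (2 * i) := by
  induction m with
  | zero => simp
  | succ k ih =>
    rw [show 2 * (k + 1) + 1 = 2 * k + 1 + 1 + 1 by ring, sum_range_succ, sum_range_succ, ih,
      hf (2 * k + 1) ⟨k, rfl⟩, add_zero, sum_range_succ _ (k + 1), mul_add, mul_one]

theorem kraw_even_sum_general (n t : ℕ) (hneven : Even n)
    (ht1 : 1 ≤ t) (htn : t ≤ n) :
    ∑ i ∈ Finset.range (n / 2 + 1),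
        ((n.choose (2 * i)) : ℤ) * 3 ^ (2 * i) * kraw n 4 t (2 * i)
      = 2 ^ (n - 1) * (n.choose t) * (-3) ^ t := by
  obtain ⟨m, rfl⟩ := hneven.two_dvd
  have hodd : ∀ x, Odd x →
      ((2 * m).choose x : ℤ) * (3 ^ x + (-3) ^ x) * kraw (2 * m) 4 t x = 0 := by
    intro x hx
    rw [hx.neg_pow]
    ring
  have hsq : ∀ i, (-3 : ℤ) ^ (2 * i) = 3 ^ (2 * i) := fun i => (even_two_mul i).neg_pow 3
  have hsum := sum_range_two_mul_add_one_eq_sum_even _ hodd m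
  simp only [mul_add, add_mul, sum_add_distrib, sum_choose_mul_pow_mul_kraw, hsq] at hsum
  norm_num [zero_pow (by omega : t ≠ 0)] at hsum
  have hpow : (6 : ℤ) ^ t * (-2) ^ (2 * m - t) = 2 * 2 ^ (2 * m - 1) * (-3) ^ t := by
    -- multiplying by `(-2)^t` turns the truncated exponent `2m - t` into `2m`
    apply mul_left_cancel₀ (pow_ne_zero t (by norm_num : (-2 : ℤ) ≠ 0))
    rw [mul_left_comm, ← pow_add, Nat.add_sub_cancel' htn, ← pow_succ',
      Nat.sub_add_cancel (by omega), (even_two_mul m).neg_pow,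
      show (6 : ℤ) = -2 * -3 by norm_num, mul_pow]
    ring
  rw [mul_assoc, hpow] at hsum
  rw [Nat.mul_div_cancel_left m two_pos]
  linarith

/-- Lemma: for even `n` and `1 ≤ t ≤ n`,
`∑_{i=0}^{n/2} C(n,2i) 3^{2i} K_t(4;2i) = 2^{n-1} C(n,t) (-3)^t`. -/
theorem kraw_even_sum (n t : ℕ) (hn : 2 ≤ n) (hneven : Even n)
    (ht1 : 1 ≤ t) (htn : t ≤ n) :
    ∑ i ∈ Finset.range (n / 2 + 1),
        ((n.choose (2 * i)) : ℤ) * 3 ^ (2 * i) * kraw n 4 t (2 * i)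
      = 2 ^ (n - 1) * (n.choose t) * (-3) ^ t :=
  kraw_even_sum_general n t hneven ht1 htn
end

section
/- Let n ≥ 1 and q ≥ 2 be integers, and let B_0^⊥, …, B_n^⊥ be real numbers with B_0^⊥ = 1 and M := Σ_{j=0}^{n} B_j^⊥ ≠ 0. Define B_j := (1/M) Σ_{i=0}^{n} B_i^⊥ K_j(q;i) for 0 ≤ j ≤ n. Then for every real p: Σ_{j=1}^{n} (B_j^⊥ − B_j) · (p/(q−1))^j (1−p)^{n−j} = (1/M) Σ_{j=1}^{n} B_j^⊥ · [ M·(p/(q−1))^j (1−p)^{n−j} − ((q−1−qp)/(q−1))^j ] + (1−p)^n − 1/M. -/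
lemma kraw_inner_sum (n i l : ℕ) (hl : l ≤ i) (hi : i ≤ n) (a b c : ℝ) :
    ∑ j ∈ Finset.Ico l (n + 1), ((n - i).choose (j - l) : ℝ) * c ^ (j - l) * (a ^ j * b ^ (n - j))
      = a ^ l * b ^ (i - l) * (c * a + b) ^ (n - i) := by
  rw [Finset.sum_Ico_eq_sum_range]
  have h1 : n + 1 - l = (n - l) + 1 := by omega
  rw [h1]
  have h2 : ∀ m : ℕ, l + m - l = m := fun m => by omega
  have key : ∀ m ∈ Finset.range ((n - l) + 1), m ∉ Finset.range ((n - i) + 1) →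
      ((n - i).choose (l + m - l) : ℝ) * c ^ (l + m - l) * (a ^ (l + m) * b ^ (n - (l + m))) = 0 := by
    intro m _ hm
    have : (n - i).choose m = 0 := Nat.choose_eq_zero_of_lt (by simp [Finset.mem_range] at hm; omega)
    simp [h2, this]
  rw [← Finset.sum_subset (Finset.range_subset_range.2 (by omega : n - i + 1 ≤ n - l + 1)) key]
  rw [add_pow, Finset.mul_sum]
  apply Finset.sum_congr rfl
  intro m hm
  simp only [Finset.mem_range] at hm
  rw [h2]
  have h3 : n - (l + m) = (i - l) + (n - i - m) := by omega
  rw [h3, pow_add, pow_add, mul_pow]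
  ring

lemma kraw_sum (n q i : ℕ) (hi : i ≤ n) (a b : ℝ) :
    ∑ j ∈ Finset.range (n + 1), (kraw n q j i : ℝ) * a ^ j * b ^ (n - j)
      = (((q : ℝ) - 1) * a + b) ^ (n - i) * (b - a) ^ i := by
  set c : ℝ := (q : ℝ) - 1 with hc
  have expand : ∀ j, (kraw n q j i : ℝ)
      = ∑ l ∈ Finset.range (j + 1),
          (-1 : ℝ) ^ l * (i.choose l) * ((n - i).choose (j - l)) * c ^ (j - l) := by
    intro j
    rw [kraw]
    push_cast
    rfl
  calc ∑ j ∈ Finset.range (n + 1), (kraw n q j i : ℝ) * a ^ j * b ^ (n - j)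
      = ∑ j ∈ Finset.range (n + 1), ∑ l ∈ Finset.range (j + 1),
          ((-1 : ℝ) ^ l * (i.choose l)) *
            (((n - i).choose (j - l)) * c ^ (j - l) * (a ^ j * b ^ (n - j))) := by
        apply Finset.sum_congr rfl
        intro j hj
        rw [expand, Finset.sum_mul, Finset.sum_mul]
        apply Finset.sum_congr rfl
        intro l hl
        ring
    _ = ∑ l ∈ Finset.range (n + 1), ∑ j ∈ Finset.Ico l (n + 1),
          ((-1 : ℝ) ^ l * (i.choose l)) *
            (((n - i).choose (j - l)) * c ^ (j - l) * (a ^ j * b ^ (n - j))) := by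
        simp only [Finset.range_eq_Ico]
        exact (Finset.sum_Ico_Ico_comm 0 (n + 1) _).symm
    _ = ∑ l ∈ Finset.range (i + 1), ∑ j ∈ Finset.Ico l (n + 1),
          ((-1 : ℝ) ^ l * (i.choose l)) *
            (((n - i).choose (j - l)) * c ^ (j - l) * (a ^ j * b ^ (n - j))) := by
        refine (Finset.sum_subset (Finset.range_subset_range.2 (by omega)) ?_).symm
        intro l _ hl
        have : i.choose l = 0 := Nat.choose_eq_zero_of_lt (by simp [Finset.mem_range] at hl; omega)
        simp [this]
    _ = ∑ l ∈ Finset.range (i + 1),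
          ((-1 : ℝ) ^ l * (i.choose l)) * (a ^ l * b ^ (i - l) * (c * a + b) ^ (n - i)) := by
        apply Finset.sum_congr rfl
        intro l hl
        simp only [Finset.mem_range] at hl
        rw [← Finset.mul_sum, kraw_inner_sum n i l (by omega) hi]
    _ = (∑ l ∈ Finset.range (i + 1), (-a) ^ l * b ^ (i - l) * (i.choose l : ℝ))
          * (c * a + b) ^ (n - i) := by
        rw [Finset.sum_mul]
        apply Finset.sum_congr rfl
        intro l hl
        rw [neg_pow]
        ring
    _ = (c * a + b) ^ (n - i) * (b - a) ^ i := by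
        rw [← add_pow, mul_comm]
        congr 1
        ring

/-- Rewriting the probability of undetected error via the dual weight
distribution: if `B` is the MacWilliams transform of `B^⊥` (normalized by
`M = ∑_j B_j^⊥`), then for every real `p`,
`∑_{j=1}^n (B_j^⊥ - B_j)(p/(q-1))^j (1-p)^{n-j}
  = (1/M) ∑_{j=1}^n B_j^⊥ [M (p/(q-1))^j (1-p)^{n-j} - ((q-1-qp)/(q-1))^j]
    + (1-p)^n - 1/M`. -/
theorem pue_rewrite_via_dual (n q : ℕ) (hn : 1 ≤ n) (hq : 2 ≤ q)
    (Bperp : ℕ → ℝ) (hB0 : Bperp 0 = 1)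
    (M : ℝ) (hM : M = ∑ j ∈ Finset.range (n + 1), Bperp j) (hM0 : M ≠ 0)
    (B : ℕ → ℝ)
    (hB : ∀ j, j ≤ n →
      B j = (1 / M) * ∑ i ∈ Finset.range (n + 1), Bperp i * (kraw n q j i : ℝ))
    (p : ℝ) :
    ∑ j ∈ Finset.Icc 1 n,
        (Bperp j - B j) * (p / ((q : ℝ) - 1)) ^ j * (1 - p) ^ (n - j)
      = (1 / M) * ∑ j ∈ Finset.Icc 1 n,
            Bperp j * (M * (p / ((q : ℝ) - 1)) ^ j * (1 - p) ^ (n - j)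
              - (((q : ℝ) - 1 - q * p) / ((q : ℝ) - 1)) ^ j)
        + (1 - p) ^ n - 1 / M := by
  have hq1 : ((q : ℝ) - 1) ≠ 0 := by
    have : (2 : ℝ) ≤ (q : ℝ) := by exact_mod_cast hq
    linarith
  set a : ℝ := p / ((q : ℝ) - 1) with ha
  set b : ℝ := 1 - p with hb
  set w : ℝ := ((q : ℝ) - 1 - q * p) / ((q : ℝ) - 1) with hwdef
  have hone : ((q : ℝ) - 1) * a + b = 1 := by
    rw [ha, hb]; field_simp; ring
  have hw : b - a = w := by
    rw [ha, hb, hwdef]; field_simp; ring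
  have hsplit : Finset.range (n + 1) = insert 0 (Finset.Icc 1 n) := by
    ext x; simp only [Finset.mem_range, Finset.mem_insert, Finset.mem_Icc]; omega
  have h0mem : (0 : ℕ) ∉ Finset.Icc 1 n := by simp
  have kraw0 : ∀ i : ℕ, kraw n q 0 i = 1 := by intro i; simp [kraw]
  have key : ∀ i ∈ Finset.range (n + 1),
      ∑ j ∈ Finset.Icc 1 n, (kraw n q j i : ℝ) * a ^ j * b ^ (n - j) = w ^ i - b ^ n := by
    intro i hi
    simp only [Finset.mem_range] at hi
    have h := kraw_sum n q i (by omega) a b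
    rw [hone, one_pow, hw, one_mul] at h
    rw [hsplit, Finset.sum_insert h0mem] at h
    rw [kraw0] at h
    simp only [Int.cast_one, pow_zero, Nat.sub_zero, one_mul] at h
    linarith [h]
  set S1 : ℝ := ∑ j ∈ Finset.Icc 1 n, Bperp j * a ^ j * b ^ (n - j) with hS1
  set S2 : ℝ := ∑ j ∈ Finset.Icc 1 n, Bperp j * w ^ j with hS2
  have hT : ∑ j ∈ Finset.Icc 1 n,
      (∑ i ∈ Finset.range (n + 1), Bperp i * (kraw n q j i : ℝ)) * a ^ j * b ^ (n - j)
      = (1 + S2) - M * b ^ n := by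
    calc ∑ j ∈ Finset.Icc 1 n,
        (∑ i ∈ Finset.range (n + 1), Bperp i * (kraw n q j i : ℝ)) * a ^ j * b ^ (n - j)
        = ∑ j ∈ Finset.Icc 1 n, ∑ i ∈ Finset.range (n + 1),
            Bperp i * ((kraw n q j i : ℝ) * a ^ j * b ^ (n - j)) := by
          apply Finset.sum_congr rfl
          intro j hj
          rw [Finset.sum_mul, Finset.sum_mul]
          apply Finset.sum_congr rfl
          intro i hi
          ring
      _ = ∑ i ∈ Finset.range (n + 1), Bperp i *
            ∑ j ∈ Finset.Icc 1 n, (kraw n q j i : ℝ) * a ^ j * b ^ (n - j) := by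
          rw [Finset.sum_comm]
          apply Finset.sum_congr rfl
          intro i hi
          rw [Finset.mul_sum]
      _ = ∑ i ∈ Finset.range (n + 1), Bperp i * (w ^ i - b ^ n) := by
          apply Finset.sum_congr rfl
          intro i hi
          rw [key i hi]
      _ = (∑ i ∈ Finset.range (n + 1), Bperp i * w ^ i) - M * b ^ n := by
          simp only [mul_sub]
          rw [Finset.sum_sub_distrib, ← Finset.sum_mul, hM]
      _ = (1 + S2) - M * b ^ n := by
          rw [hsplit, Finset.sum_insert h0mem, hB0, hS2]
          ring
  have hL : ∑ j ∈ Finset.Icc 1 n, (Bperp j - B j) * a ^ j * b ^ (n - j)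
      = S1 - (1 / M) * ((1 + S2) - M * b ^ n) := by
    rw [← hT, hS1, Finset.mul_sum, ← Finset.sum_sub_distrib]
    apply Finset.sum_congr rfl
    intro j hj
    simp only [Finset.mem_Icc] at hj
    rw [hB j hj.2]
    ring
  have hR : ∑ j ∈ Finset.Icc 1 n,
      Bperp j * (M * a ^ j * b ^ (n - j) - w ^ j) = M * S1 - S2 := by
    rw [hS1, hS2, Finset.mul_sum, ← Finset.sum_sub_distrib]
    apply Finset.sum_congr rfl
    intro j hj
    ring
  rw [hL, hR]
  field_simp
  ring
end

section
/- Let n ≥ 1 and q ≥ 2 be integers, M > 1 a real number, and p a real number with 0 ≤ p ≤ 1. Let B_1^⊥, …, B_n^⊥ be nonnegative reals satisfying: (a) Σ_{j=1}^{n} B_j^⊥ = M − 1; (b) Σ_{j=1}^{n} B_j^⊥ K_i(q;j) ≥ −C(n,i)(q−1)^i for all 1 ≤ i ≤ n; (c) M·B_j^⊥ − Σ_{i=1}^{n} B_i^⊥ K_j(q;i) ≥ C(n,j)(q−1)^j for all 1 ≤ j ≤ n. Set B_0^⊥ = 1 and define B_j := (1/M) Σ_{i=0}^{n} B_i^⊥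 K_j(q;i). Let z_0, y_0 be arbitrary reals and z_1, …, z_n, y_1, …, y_n nonnegative reals, and put Z(x) = Σ_{i=0}^{n} z_i K_i(q;x), Y(x) = Σ_{i=0}^{n} y_i K_i(q;x). If for all 1 ≤ j ≤ n: Z(j) − Y(j) + y_0 + y_j·M ≤ M·(p/(q−1))^j (1−p)^{n−j} − ((q−1−qp)/(q−1))^j, then Σ_{j=1}^{n} (B_j^⊥ − B_j) (p/(q−1))^j (1−p)^{n−j} ≥ (1/M)·(z_0·M − Z(0) + Y(0) − y_0) + (1−p)^n − 1/M. -/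
lemma split0 (f : ℕ → ℝ) (n : ℕ) :
    ∑ i ∈ Finset.range (n+1), f i = f 0 + ∑ i ∈ Finset.Icc 1 n, f i := by
  rw [← Finset.Ico_add_one_right_eq_Icc, Finset.sum_Ico_eq_sum_range, Finset.sum_range_succ']
  simp [add_comm]

lemma kraw_zero (n q x : ℕ) : kraw n q 0 x = 1 := by
  simp [kraw]

lemma kraw_at_zero (n q t : ℕ) : kraw n q t 0 = (n.choose t) * ((q : ℤ) - 1) ^ t := by
  rw [kraw, Finset.sum_eq_single 0]
  · simp
  · intro l hl hl0
    simp [Nat.choose_eq_zero_of_lt (Nat.pos_of_ne_zero hl0)]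
  · simp

lemma kraw_gen (n q i : ℕ) (hi : i ≤ n) (u v : ℝ) :
    ∑ j ∈ Finset.range (n+1), (kraw n q j i : ℝ) * u^j * v^(n-j)
      = (v - u)^i * (v + ((q:ℝ)-1)*u)^(n-i) := by
  set c : ℝ := (q:ℝ) - 1 with hc
  set g : ℕ → ℕ → ℝ := fun l m =>
    ((-1)^l * (i.choose l) * ((n-i).choose m) * c^m) * u^(l+m) * v^(n-(l+m)) with hg
  have step1 : ∀ j ∈ Finset.range (n+1),
      (kraw n q j i : ℝ) * u^j * v^(n-j) = ∑ l ∈ Finset.range (j+1), g l (j-l) := by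
    intro j hj
    rw [kraw]
    push_cast
    rw [Finset.sum_mul, Finset.sum_mul]
    apply Finset.sum_congr rfl
    intro l hl
    have hl' : l ≤ j := Nat.lt_succ_iff.mp (Finset.mem_range.mp hl)
    simp only [hg]
    rw [Nat.add_sub_cancel' hl']
  rw [Finset.sum_congr rfl step1]
  rw [Finset.sum_sigma']
  have step2 : ∑ x ∈ (Finset.range (n+1)).sigma (fun j => Finset.range (j+1)), g x.2 (x.1 - x.2)
      = ∑ x ∈ (Finset.range (n+1) ×ˢ Finset.range (n+1)).filter (fun x => x.1 + x.2 ≤ n),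
          g x.1 x.2 := by
    apply Finset.sum_nbij' (i := fun x => (x.2, x.1 - x.2))
      (j := fun x => ⟨x.1 + x.2, x.1⟩)
    · intro a ha
      simp only [Finset.mem_sigma, Finset.mem_range] at ha
      simp only [Finset.mem_filter, Finset.mem_product, Finset.mem_range]
      omega
    · intro a ha
      simp only [Finset.mem_filter, Finset.mem_product, Finset.mem_range] at ha
      simp only [Finset.mem_sigma, Finset.mem_range]
      omega
    · intro a ha
      simp only [Finset.mem_sigma, Finset.mem_range] at ha
      ext <;> simp <;> omega
    · intro a ha
      simp only [Finset.mem_filter, Finset.mem_product, Finset.mem_range] at ha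
      simp
    · intro a ha
      rfl
  rw [step2]
  have step3 : ∑ x ∈ (Finset.range (n+1) ×ˢ Finset.range (n+1)).filter (fun x => x.1 + x.2 ≤ n),
        g x.1 x.2
      = ∑ x ∈ Finset.range (i+1) ×ˢ Finset.range (n-i+1), g x.1 x.2 := by
    symm
    apply Finset.sum_subset
    · intro x hx
      simp only [Finset.mem_product, Finset.mem_range] at hx
      simp only [Finset.mem_filter, Finset.mem_product, Finset.mem_range]
      omega
    · intro x hx hxn
      simp only [Finset.mem_filter, Finset.mem_product, Finset.mem_range] at hx
      simp only [Finset.mem_product, Finset.mem_range] at hxn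
      have : i < x.1 ∨ n - i < x.2 := by omega
      rcases this with h | h
      · simp [hg, Nat.choose_eq_zero_of_lt h]
      · simp [hg, Nat.choose_eq_zero_of_lt h]
  rw [step3]
  have step4 : ∀ x ∈ Finset.range (i+1) ×ˢ Finset.range (n-i+1),
      g x.1 x.2 = ((-u)^x.1 * v^(i-x.1) * (i.choose x.1))
        * ((c*u)^x.2 * v^(n-i-x.2) * ((n-i).choose x.2)) := by
    intro x hx
    simp only [Finset.mem_product, Finset.mem_range] at hx
    obtain ⟨h1, h2⟩ := hx
    have e1 : n - (x.1 + x.2) = (i - x.1) + ((n-i) - x.2) := by omega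
    simp only [hg]
    rw [e1, pow_add, pow_add, neg_pow, mul_pow]
    ring
  rw [Finset.sum_congr rfl step4, Finset.sum_product,
    show v - u = -u + v by ring, show v + c*u = c*u + v by ring, add_pow, add_pow,
    Finset.sum_mul_sum]

lemma kraw_w (n q i : ℕ) (hq : 2 ≤ q) (hi : i ≤ n) (p : ℝ) :
    ∑ j ∈ Finset.range (n+1),
        (kraw n q j i : ℝ) * (p/((q:ℝ)-1))^j * (1-p)^(n-j)
      = (((q:ℝ)-1-q*p)/((q:ℝ)-1))^i := by
  have hq2 : (2:ℝ) ≤ (q:ℝ) := by exact_mod_cast hq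
  have hq0 : ((q:ℝ)-1) ≠ 0 := by linarith
  rw [kraw_gen n q i hi]
  have h1 : (1-p) + ((q:ℝ)-1) * (p/((q:ℝ)-1)) = 1 := by field_simp; ring
  have h2 : (1-p) - p/((q:ℝ)-1) = ((q:ℝ)-1-q*p)/((q:ℝ)-1) := by field_simp; ring
  rw [h1, h2, one_pow, mul_one]

/-- Theorem 8 (LP dual bound via the dual weight distribution `B^⊥`): any feasible
solution `(z, y)` of the dual linear program yields a lower bound on the probability
of undetected error. -/
theorem lp_lower_bound_via_dual (n q : ℕ) (hn : 1 ≤ n) (hq : 2 ≤ q)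
    (M : ℝ) (hM : 1 < M) (p : ℝ) (hp0 : 0 ≤ p) (hp1 : p ≤ 1)
    (Bperp : ℕ → ℝ) (hB0 : Bperp 0 = 1)
    (hBnn : ∀ j, 1 ≤ j → j ≤ n → 0 ≤ Bperp j)
    (ha : ∑ j ∈ Finset.Icc 1 n, Bperp j = M - 1)
    (hb : ∀ i, 1 ≤ i → i ≤ n →
      -(((n.choose i) : ℝ) * ((q : ℝ) - 1) ^ i)
        ≤ ∑ j ∈ Finset.Icc 1 n, Bperp j * (kraw n q i j : ℝ))
    (hc : ∀ j, 1 ≤ j → j ≤ n →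
      ((n.choose j) : ℝ) * ((q : ℝ) - 1) ^ j
        ≤ M * Bperp j - ∑ i ∈ Finset.Icc 1 n, Bperp i * (kraw n q j i : ℝ))
    (B : ℕ → ℝ)
    (hB : ∀ j, j ≤ n →
      B j = (1 / M) * ∑ i ∈ Finset.range (n + 1), Bperp i * (kraw n q j i : ℝ))
    (z y : ℕ → ℝ)
    (hz : ∀ j, 1 ≤ j → j ≤ n → 0 ≤ z j) (hy : ∀ j, 1 ≤ j → j ≤ n → 0 ≤ y j)
    (Z Y : ℕ → ℝ)
    (hZ : ∀ x, x ≤ n → Z x = ∑ i ∈ Finset.range (n + 1), z i * (kraw n q i x : ℝ))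
    (hY : ∀ x, x ≤ n → Y x = ∑ i ∈ Finset.range (n + 1), y i * (kraw n q i x : ℝ))
    (hfeas : ∀ j, 1 ≤ j → j ≤ n →
      Z j - Y j + y 0 + y j * M
        ≤ M * (p / ((q : ℝ) - 1)) ^ j * (1 - p) ^ (n - j)
          - (((q : ℝ) - 1 - q * p) / ((q : ℝ) - 1)) ^ j) :
    ∑ j ∈ Finset.Icc 1 n,
        (Bperp j - B j) * (p / ((q : ℝ) - 1)) ^ j * (1 - p) ^ (n - j)
      ≥ (1 / M) * (z 0 * M - Z 0 + Y 0 - y 0) + (1 - p) ^ n - 1 / M := by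
  have hM0 : (0:ℝ) < M := lt_trans one_pos hM
  have hMne : M ≠ 0 := ne_of_gt hM0
  set w : ℕ → ℝ := fun j => (p/((q:ℝ)-1))^j * (1-p)^(n-j) with hw
  set s : ℝ := ((q:ℝ)-1-q*p)/((q:ℝ)-1) with hs
  have hK0 : ∀ x : ℕ, (kraw n q 0 x : ℝ) = 1 := by
    intro x; rw [kraw_zero]; norm_num
  have hKx0 : ∀ t : ℕ, (kraw n q t 0 : ℝ) = (n.choose t : ℝ) * ((q:ℝ)-1)^t := by
    intro t; rw [kraw_at_zero]; push_cast; ring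
  set G : ℕ → ℝ := fun t => ∑ j ∈ Finset.Icc 1 n, Bperp j * (kraw n q t j : ℝ) with hG
  have hG0 : G 0 = M - 1 := by
    simp only [hG]
    calc ∑ j ∈ Finset.Icc 1 n, Bperp j * (kraw n q 0 j : ℝ)
        = ∑ j ∈ Finset.Icc 1 n, Bperp j := by
          apply Finset.sum_congr rfl; intro j hj; rw [hK0]; ring
      _ = M - 1 := ha
  -- B 0 = 1
  have hMB0 : M * B 0 = M := by
    rw [hB 0 (Nat.zero_le n)]
    rw [split0 (fun i => Bperp i * (kraw n q 0 i : ℝ)) n]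
    have e : (fun i => Bperp i * (kraw n q 0 i : ℝ)) 0
        + ∑ i ∈ Finset.Icc 1 n, Bperp i * (kraw n q 0 i : ℝ) = M := by
      simp only [hB0, hK0, one_mul, mul_one]
      rw [ha]
      ring
    rw [e]
    field_simp
  have hB0' : B 0 = 1 := by
    have := hMB0
    field_simp at this
    tauto
  -- transform identity
  have hBW : ∑ j ∈ Finset.range (n+1), B j * w j
      = (1/M) * ∑ i ∈ Finset.range (n+1), Bperp i * s^i := by
    have e1 : ∀ j ∈ Finset.range (n+1), B j * w j
        = (1/M) * ∑ i ∈ Finset.range (n+1), Bperp i * (kraw n q j i : ℝ) * w j := by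
      intro j hj
      have hj' : j ≤ n := Nat.lt_succ_iff.mp (Finset.mem_range.mp hj)
      rw [hB j hj', mul_assoc, Finset.sum_mul]
    rw [Finset.sum_congr rfl e1, ← Finset.mul_sum, Finset.sum_comm]
    congr 1
    apply Finset.sum_congr rfl
    intro i hi
    have hi' : i ≤ n := Nat.lt_succ_iff.mp (Finset.mem_range.mp hi)
    calc ∑ j ∈ Finset.range (n+1), Bperp i * (kraw n q j i : ℝ) * w j
        = Bperp i * ∑ j ∈ Finset.range (n+1),
            (kraw n q j i : ℝ) * (p/((q:ℝ)-1))^j * (1-p)^(n-j) := by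
          rw [Finset.mul_sum]
          apply Finset.sum_congr rfl
          intro j hj
          simp only [hw]
          ring
      _ = Bperp i * s^i := by rw [kraw_w n q i hq hi']
  set A : ℝ := ∑ j ∈ Finset.Icc 1 n, Bperp j * w j with hA
  set Cs : ℝ := ∑ j ∈ Finset.Icc 1 n, Bperp j * s^j with hCs
  have hsum : ∑ j ∈ Finset.Icc 1 n, B j * w j = (1/M) * (1 + Cs) - (1-p)^n := by
    have h1 := hBW
    rw [split0 (fun j => B j * w j) n, split0 (fun i => Bperp i * s^i) n] at h1
    simp only [hB0', hB0, one_mul, pow_zero, mul_one] at h1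
    have hw0 : w 0 = (1-p)^n := by simp [hw]
    rw [hw0] at h1
    rw [← hCs] at h1
    linarith
  -- the main inequality
  have eZ : ∑ j ∈ Finset.Icc 1 n, Bperp j * Z j
      = z 0 * G 0 + ∑ i ∈ Finset.Icc 1 n, z i * G i := by
    calc ∑ j ∈ Finset.Icc 1 n, Bperp j * Z j
        = ∑ j ∈ Finset.Icc 1 n, ∑ i ∈ Finset.range (n+1), z i * (Bperp j * (kraw n q i j : ℝ)) := by
          apply Finset.sum_congr rfl
          intro j hj
          rw [hZ j (Finset.mem_Icc.mp hj).2, Finset.mul_sum]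
          apply Finset.sum_congr rfl
          intro i hi
          ring
      _ = ∑ i ∈ Finset.range (n+1), z i * G i := by
          rw [Finset.sum_comm]
          apply Finset.sum_congr rfl
          intro i hi
          rw [hG, ← Finset.mul_sum]
      _ = z 0 * G 0 + ∑ i ∈ Finset.Icc 1 n, z i * G i := split0 (fun i => z i * G i) n
  have eY : ∑ j ∈ Finset.Icc 1 n, Bperp j * Y j
      = y 0 * G 0 + ∑ i ∈ Finset.Icc 1 n, y i * G i := by
    calc ∑ j ∈ Finset.Icc 1 n, Bperp j * Y j
        = ∑ j ∈ Finset.Icc 1 n, ∑ i ∈ Finset.range (n+1), y i * (Bperp j * (kraw n q i j : ℝ)) := by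
          apply Finset.sum_congr rfl
          intro j hj
          rw [hY j (Finset.mem_Icc.mp hj).2, Finset.mul_sum]
          apply Finset.sum_congr rfl
          intro i hi
          ring
      _ = ∑ i ∈ Finset.range (n+1), y i * G i := by
          rw [Finset.sum_comm]
          apply Finset.sum_congr rfl
          intro i hi
          rw [hG, ← Finset.mul_sum]
      _ = y 0 * G 0 + ∑ i ∈ Finset.Icc 1 n, y i * G i := split0 (fun i => y i * G i) n
  have eZ0 : Z 0 = z 0 + ∑ i ∈ Finset.Icc 1 n, z i * ((n.choose i : ℝ) * ((q:ℝ)-1)^i) := by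
    rw [hZ 0 (Nat.zero_le n), split0 (fun i => z i * (kraw n q i 0 : ℝ)) n]
    simp only [hKx0]
    norm_num
  have eY0 : Y 0 = y 0 + ∑ i ∈ Finset.Icc 1 n, y i * ((n.choose i : ℝ) * ((q:ℝ)-1)^i) := by
    rw [hY 0 (Nat.zero_le n), split0 (fun i => y i * (kraw n q i 0 : ℝ)) n]
    simp only [hKx0]
    norm_num
  have bZ : z 0 * M - Z 0 ≤ ∑ j ∈ Finset.Icc 1 n, Bperp j * Z j := by
    rw [eZ, hG0, eZ0]
    have h1 : ∑ i ∈ Finset.Icc 1 n, z i * (-((n.choose i : ℝ) * ((q:ℝ)-1)^i))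
        ≤ ∑ i ∈ Finset.Icc 1 n, z i * G i := by
      apply Finset.sum_le_sum
      intro i hi
      obtain ⟨hi1, hi2⟩ := Finset.mem_Icc.mp hi
      exact mul_le_mul_of_nonneg_left (hb i hi1 hi2) (hz i hi1 hi2)
    have h2 : ∑ i ∈ Finset.Icc 1 n, z i * (-((n.choose i : ℝ) * ((q:ℝ)-1)^i))
        = -∑ i ∈ Finset.Icc 1 n, z i * ((n.choose i : ℝ) * ((q:ℝ)-1)^i) := by
      rw [← Finset.sum_neg_distrib]
      apply Finset.sum_congr rfl
      intro i hi
      ring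
    linarith
  have bY : Y 0 - y 0
      ≤ ∑ i ∈ Finset.Icc 1 n, y i * (M * Bperp i - G i) := by
    rw [eY0]
    have h1 : ∑ i ∈ Finset.Icc 1 n, y i * ((n.choose i : ℝ) * ((q:ℝ)-1)^i)
        ≤ ∑ i ∈ Finset.Icc 1 n, y i * (M * Bperp i - G i) := by
      apply Finset.sum_le_sum
      intro i hi
      obtain ⟨hi1, hi2⟩ := Finset.mem_Icc.mp hi
      exact mul_le_mul_of_nonneg_left (hc i hi1 hi2) (hy i hi1 hi2)
    linarith
  have hsplit : ∑ i ∈ Finset.Icc 1 n, y i * (M * Bperp i - G i)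
      = M * (∑ i ∈ Finset.Icc 1 n, y i * Bperp i) - ∑ i ∈ Finset.Icc 1 n, y i * G i := by
    rw [Finset.mul_sum, ← Finset.sum_sub_distrib]
    apply Finset.sum_congr rfl
    intro i hi
    ring
  have hstep : ∑ j ∈ Finset.Icc 1 n, Bperp j * (Z j - Y j + y 0 + y j * M)
      ≤ M * A - Cs := by
    have h1 : ∑ j ∈ Finset.Icc 1 n, Bperp j * (Z j - Y j + y 0 + y j * M)
        ≤ ∑ j ∈ Finset.Icc 1 n, Bperp j * (M * w j - s^j) := by
      apply Finset.sum_le_sum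
      intro j hj
      obtain ⟨hj1, hj2⟩ := Finset.mem_Icc.mp hj
      apply mul_le_mul_of_nonneg_left _ (hBnn j hj1 hj2)
      have := hfeas j hj1 hj2
      calc Z j - Y j + y 0 + y j * M
          ≤ M * (p / ((q:ℝ)-1))^j * (1-p)^(n-j) - (((q:ℝ)-1-q*p)/((q:ℝ)-1))^j := this
        _ = M * w j - s^j := by simp only [hw, hs]; ring
    have h2 : ∑ j ∈ Finset.Icc 1 n, Bperp j * (M * w j - s^j) = M * A - Cs := by
      calc ∑ j ∈ Finset.Icc 1 n, Bperp j * (M * w j - s^j)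
          = ∑ j ∈ Finset.Icc 1 n, (M * (Bperp j * w j) - Bperp j * s^j) := by
            apply Finset.sum_congr rfl; intro j hj; ring
        _ = M * A - Cs := by rw [Finset.sum_sub_distrib, Finset.mul_sum]
    linarith
  have hexp : ∑ j ∈ Finset.Icc 1 n, Bperp j * (Z j - Y j + y 0 + y j * M)
      = (∑ j ∈ Finset.Icc 1 n, Bperp j * Z j) - (∑ j ∈ Finset.Icc 1 n, Bperp j * Y j)
        + y 0 * (M - 1) + M * ∑ j ∈ Finset.Icc 1 n, y j * Bperp j := by
    calc ∑ j ∈ Finset.Icc 1 n, Bperp j * (Z j - Y j + y 0 + y j * M)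
        = ∑ j ∈ Finset.Icc 1 n,
            (Bperp j * Z j - Bperp j * Y j + y 0 * Bperp j + M * (y j * Bperp j)) := by
          apply Finset.sum_congr rfl; intro j hj; ring
      _ = _ := by
          rw [Finset.sum_add_distrib, Finset.sum_add_distrib, Finset.sum_sub_distrib,
            ← Finset.mul_sum, ← Finset.mul_sum, ha]
  have hchain : z 0 * M - Z 0 + Y 0 - y 0 ≤ M * A - Cs := by
    have := hstep
    rw [hexp] at this
    rw [hsplit] at bY
    rw [eY, hG0] at this
    linarith
  -- finish
  have eL : ∑ j ∈ Finset.Icc 1 n,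
      (Bperp j - B j) * (p / ((q:ℝ)-1))^j * (1-p)^(n-j)
      = A - ∑ j ∈ Finset.Icc 1 n, B j * w j := by
    rw [hA, ← Finset.sum_sub_distrib]
    apply Finset.sum_congr rfl
    intro j hj
    simp only [hw]
    ring
  rw [ge_iff_le, eL, hsum]
  have h2 : (1/M) * (z 0 * M - Z 0 + Y 0 - y 0) ≤ (1/M) * (M * A - Cs) :=
    mul_le_mul_of_nonneg_left hchain (by positivity)
  have h3 : (1/M) * (M * A - Cs) = A - (1/M) * Cs := by
    field_simp
  linarith
end

section
/- Let n ≥ 1 and q ≥ 3 be integers, and let e, x be integers with 0 ≤ e ≤ n and 0 ≤ x ≤ n. Then Σ_{i=0}^{n} K_e(q;i)² · K_i(q;x) = qⁿ · Σ_s C(x, 2x+2s−2e) · C(n−x, s) · C(2x+2s−2e, x+s−e) · (q−2)^{2e−2s−x} · (q−1)^s, where the sum runs over all integers s with max(0, e−x) ≤ s and 2s + x ≤ 2e. In particular, the left-hand side equals 0 whenever x > 2e. -/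
open Finset Polynomial

/-- coefficient of `(C p + C g * X)^x` at `m`. -/
lemma coeff_pow_CC {R : Type*} [CommSemiring R] (p g : R) (x m : ℕ) :
    ((C p + C g * X) ^ x).coeff m = (x.choose m : R) * g ^ m * p ^ (x - m) := by
  rw [add_comm (C p), add_pow, finset_sum_coeff]
  have h : ∀ k ∈ Finset.range (x + 1),
      ((C g * X) ^ k * (C p) ^ (x - k) * (x.choose k : R[X])).coeff m
        = if k = m then (x.choose k : R) * g ^ k * p ^ (x - k) else 0 := by
    intro k hk
    rw [mul_pow, ← C_pow, ← C_pow, ← C_eq_natCast]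
    simp only [coeff_mul_C, coeff_C_mul, coeff_X_pow]
    by_cases hkm : k = m
    · subst hkm; simp; ring
    · simp [hkm, Ne.symm hkm]
  rw [Finset.sum_congr rfl h]
  rw [Finset.sum_ite_eq' _ _ (fun k => (x.choose k : R) * g ^ k * p ^ (x - k))]
  by_cases hm : m ∈ Finset.range (x + 1)
  · simp [hm]
  · simp only [hm, if_false]
    have : x.choose m = 0 := Nat.choose_eq_zero_of_lt (by simpa using hm)
    simp [this]

open Finset Polynomial



/-- Hamming weight of a vector over `ZMod q`. -/
def kwt {n q : ℕ} (v : Fin n → ZMod q) : ℕ := (Finset.univ.filter fun j => v j ≠ 0).card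

/-- dot product -/
def kdot {n q : ℕ} (a v : Fin n → ZMod q) : ZMod q := ∑ j, a j * v j

lemma kwt_le {n q : ℕ} (v : Fin n → ZMod q) : kwt v ≤ n := by
  classical
  simpa [kwt] using (Finset.card_filter_le Finset.univ fun j => v j ≠ 0)

lemma kwt_neg {n q : ℕ} (v : Fin n → ZMod q) : kwt (-v) = kwt v := by
  unfold kwt; congr 1; ext j; simp

lemma kdot_comm {n q : ℕ} (a v : Fin n → ZMod q) : kdot a v = kdot v a := by
  unfold kdot; exact Finset.sum_congr rfl fun j _ => mul_comm _ _

lemma kdot_add_left {n q : ℕ} (a b v : Fin n → ZMod q) :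
    kdot (a + b) v = kdot a v + kdot b v := by
  unfold kdot; rw [← Finset.sum_add_distrib]
  exact Finset.sum_congr rfl fun j _ => by simp [add_mul]

section Char
variable {q : ℕ} [NeZero q]

lemma psi_sum {M : Type*} [CommMonoid M] (ψ : AddChar (ZMod q) M) {ι : Type*} (s : Finset ι)
    (f : ι → ZMod q) : ψ (∑ j ∈ s, f j) = ∏ j ∈ s, ψ (f j) := by
  classical
  induction s using Finset.cons_induction with
  | empty => simp
  | cons a s ha ih => rw [Finset.sum_cons, Finset.prod_cons, AddChar.map_add_eq_mul, ih]

variable (q) in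
noncomputable def ψq : AddChar (ZMod q) ℂ :=
  AddChar.zmodChar q ((Complex.isPrimitiveRoot_exp q (NeZero.ne q)).pow_eq_one)

lemma ψq_prim : (ψq q).IsPrimitive :=
  AddChar.zmodChar_primitive_of_primitive_root q (Complex.isPrimitiveRoot_exp q (NeZero.ne q))

/-- characters sum over `ZMod q`. -/
lemma sum_psi_mul (b : ZMod q) :
    ∑ c : ZMod q, ψq q (c * b) = if b = 0 then (q : ℂ) else 0 := by
  rw [AddChar.sum_mulShift b ψq_prim, ZMod.card]
  split_ifs <;> simp

/-- sum over nonzero elements. -/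
lemma sum_psi_mul_ne_zero (b : ZMod q) :
    ∑ c ∈ Finset.univ \ {0}, ψq q (c * b) = (if b = 0 then (q : ℂ) else 0) - 1 := by
  have := Finset.sum_eq_sum_sdiff_singleton_add (Finset.mem_univ (0 : ZMod q))
    (fun c => ψq q (c * b))
  rw [sum_psi_mul b] at this
  have h0 : ψq q (0 * b) = 1 := by simp
  rw [h0] at this
  rw [eq_sub_iff_add_eq, ← this]

/-- full character sum over vectors. -/
lemma sum_psi_vec {n : ℕ} (c : Fin n → ZMod q) :
    ∑ v : Fin n → ZMod q, ψq q (kdot c v) = if c = 0 then (q : ℂ) ^ n else 0 := by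
  classical
  have h1 : ∀ v : Fin n → ZMod q, ψq q (kdot c v) = ∏ j, ψq q (v j * c j) := by
    intro v
    rw [kdot, psi_sum]
    exact Finset.prod_congr rfl fun j _ => by rw [mul_comm]
  simp_rw [h1]
  rw [← Fintype.piFinset_univ,
    Finset.sum_prod_piFinset (Finset.univ : Finset (ZMod q)) (fun j x => ψq q (x * c j))]
  simp_rw [sum_psi_mul]
  by_cases hc : c = 0
  · simp [hc]
  · obtain ⟨j, hj⟩ := Function.ne_iff.mp hc
    rw [if_neg hc]
    have hj' : c j ≠ 0 := by simpa using hj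
    exact Finset.prod_eq_zero (Finset.mem_univ j) (by simp [hj'])
end Char

open Finset Polynomial

section T3
variable {n q : ℕ} [NeZero q]

lemma prod_ite_wt (v : Fin n → ZMod q) {M : Type*} [CommMonoid M] (A B : M) :
    (∏ j : Fin n, if v j = 0 then A else B) = A ^ (n - kwt v) * B ^ kwt v := by
  classical
  rw [Finset.prod_ite, Finset.prod_const, Finset.prod_const]
  have h1 : (Finset.univ.filter fun j : Fin n => ¬ v j = 0).card = kwt v := rfl
  have h2 : (Finset.univ.filter fun j : Fin n => v j = 0).card = n - kwt v := by
    have h3 := Finset.card_filter_add_card_filter_not (s := Finset.univ)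
      (p := fun j : Fin n => v j = 0)
    rw [Finset.card_univ, Fintype.card_fin] at h3
    omega
  rw [h1, h2]

lemma term_prod (v a : Fin n → ZMod q) :
    Polynomial.C (ψq q (kdot a v)) * (X : ℂ[X]) ^ kwt a
      = ∏ j, (Polynomial.C (ψq q (a j * v j)) * X ^ (if a j ≠ 0 then 1 else 0)) := by
  classical
  rw [Finset.prod_mul_distrib]
  congr 1
  · rw [kdot, psi_sum, map_prod]
  · rw [kwt, Finset.card_filter, ← Finset.prod_pow_eq_pow_sum]

lemma genpoly_eq (v : Fin n → ZMod q) :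
    ∑ a : Fin n → ZMod q, Polynomial.C (ψq q (kdot a v)) * (X : ℂ[X]) ^ kwt a
      = (Polynomial.C 1 + Polynomial.C ((q : ℂ) - 1) * X) ^ (n - kwt v)
          * (Polynomial.C 1 + Polynomial.C (-1 : ℂ) * X) ^ kwt v := by
  classical
  simp_rw [term_prod v]
  rw [← Fintype.piFinset_univ,
    Finset.sum_prod_piFinset (Finset.univ : Finset (ZMod q))
      (fun j c => Polynomial.C (ψq q (c * v j)) * X ^ (if c ≠ 0 then 1 else 0))]
  have hinner : ∀ j : Fin n,
      (∑ c : ZMod q, Polynomial.C (ψq q (c * v j)) * (X : ℂ[X]) ^ (if c ≠ 0 then 1 else 0))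
        = if v j = 0 then Polynomial.C 1 + Polynomial.C ((q : ℂ) - 1) * X
          else Polynomial.C 1 + Polynomial.C (-1 : ℂ) * X := by
    intro j
    rw [Finset.sum_eq_sum_sdiff_singleton_add (Finset.mem_univ (0 : ZMod q))]
    have hdiff : ∀ c ∈ Finset.univ \ {(0 : ZMod q)},
        Polynomial.C (ψq q (c * v j)) * (X : ℂ[X]) ^ (if c ≠ 0 then 1 else 0)
          = Polynomial.C (ψq q (c * v j)) * X := by
      intro c hc
      have : c ≠ 0 := by simpa using (Finset.mem_sdiff.mp hc).2
      simp [this]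
    rw [Finset.sum_congr rfl hdiff, ← Finset.sum_mul, ← map_sum, sum_psi_mul_ne_zero]
    by_cases hv : v j = 0 <;> simp [hv] <;> ring
  rw [Finset.prod_congr rfl (fun j _ => hinner j), prod_ite_wt]

/-- Sum of character values over the weight-`t` sphere equals a Krawtchouk value. -/
lemma sphere_sum_eq_kraw (u : Fin n → ZMod q) (t : ℕ) :
    ∑ a ∈ Finset.univ.filter (fun a : Fin n → ZMod q => kwt a = t), ψq q (kdot a u)
      = ((kraw n q t (kwt u) : ℤ) : ℂ) := by
  classical
  have hcoeff : (∑ a : Fin n → ZMod q,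
      Polynomial.C (ψq q (kdot a u)) * (X : ℂ[X]) ^ kwt a).coeff t
        = ∑ a ∈ Finset.univ.filter (fun a : Fin n → ZMod q => kwt a = t), ψq q (kdot a u) := by
    rw [finset_sum_coeff, Finset.sum_filter]
    refine Finset.sum_congr rfl fun a _ => ?_
    rw [coeff_C_mul, coeff_X_pow]
    by_cases h : kwt a = t
    · simp [h]
    · simp [h, Ne.symm h]
  rw [← hcoeff, genpoly_eq, mul_comm, coeff_mul,
    Finset.Nat.sum_antidiagonal_eq_sum_range_succ_mk]
  rw [kraw]
  push_cast
  refine Finset.sum_congr rfl fun l hl => ?_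
  rw [coeff_pow_CC, coeff_pow_CC]
  ring
end T3
section T4
open Finset Polynomial
variable {n q : ℕ} [NeZero q]

lemma lhs_eq_count (e : ℕ) (u : Fin n → ZMod q) :
    ((∑ i ∈ Finset.range (n + 1), (kraw n q e i) ^ 2 * kraw n q i (kwt u) : ℤ) : ℂ)
      = (q : ℂ) ^ n * ((Finset.univ.filter (fun a : Fin n → ZMod q =>
          kwt a = e ∧ kwt (-u - a) = e)).card : ℂ) := by
  classical
  push_cast
  have step1 : ∀ i : ℕ, ((kraw n q e i : ℤ) : ℂ) ^ 2 * ((kraw n q i (kwt u) : ℤ) : ℂ)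
      = ∑ v ∈ Finset.univ.filter (fun v : Fin n → ZMod q => kwt v = i),
          ((kraw n q e (kwt v) : ℤ) : ℂ) ^ 2 * ψq q (kdot v u) := by
    intro i
    rw [← sphere_sum_eq_kraw u i, Finset.mul_sum]
    refine Finset.sum_congr rfl fun v hv => ?_
    rw [(Finset.mem_filter.mp hv).2]
  simp_rw [step1]
  rw [Finset.sum_fiberwise_of_maps_to (fun v _ => Finset.mem_range.mpr
    (Nat.lt_succ_of_le (kwt_le v))) (fun v => ((kraw n q e (kwt v) : ℤ) : ℂ) ^ 2 * ψq q (kdot v u))]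
  have step2 : ∀ v : Fin n → ZMod q, ((kraw n q e (kwt v) : ℤ) : ℂ) ^ 2 * ψq q (kdot v u)
      = ∑ a ∈ Finset.univ.filter (fun a : Fin n → ZMod q => kwt a = e),
          ∑ b ∈ Finset.univ.filter (fun b : Fin n → ZMod q => kwt b = e),
            ψq q (kdot (a + b + u) v) := by
    intro v
    rw [← sphere_sum_eq_kraw v e, sq, Finset.sum_mul_sum, Finset.sum_mul]
    refine Finset.sum_congr rfl fun a _ => ?_
    rw [Finset.sum_mul]
    refine Finset.sum_congr rfl fun b _ => ?_
    rw [kdot_add_left, kdot_add_left, AddChar.map_add_eq_mul, AddChar.map_add_eq_mul,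
      kdot_comm u v]
  simp_rw [step2]
  rw [Finset.sum_comm]
  have step3 : ∀ a, ∑ v : Fin n → ZMod q,
      ∑ b ∈ Finset.univ.filter (fun b : Fin n → ZMod q => kwt b = e),
        ψq q (kdot (a + b + u) v)
      = ∑ b ∈ Finset.univ.filter (fun b : Fin n → ZMod q => kwt b = e),
          if b = -u - a then (q : ℂ) ^ n else 0 := by
    intro a
    rw [Finset.sum_comm]
    refine Finset.sum_congr rfl fun b _ => ?_
    rw [sum_psi_vec]
    congr 1
    simp only [eq_iff_iff]
    constructor
    · intro h
      have hb : b = -(a + u) := by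
        rwa [show a + b + u = b + (a + u) by abel, add_eq_zero_iff_eq_neg] at h
      rw [hb]; abel
    · intro h; rw [h]; abel
  simp_rw [step3, Finset.sum_ite_eq' (Finset.univ.filter
    (fun b : Fin n → ZMod q => kwt b = e)) _ (fun _ => (q : ℂ) ^ n)]
  rw [Finset.sum_ite, Finset.sum_const, Finset.sum_const, Finset.filter_filter,
    Finset.filter_filter]
  simp only [add_zero, Finset.sum_const_zero, nsmul_eq_mul, mul_zero]
  rw [mul_comm]
  have hfil : (Finset.univ.filter (fun a : Fin n → ZMod q =>
        kwt a = e ∧ -u - a ∈ Finset.univ.filter (fun b : Fin n → ZMod q => kwt b = e)))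
      = Finset.univ.filter (fun a : Fin n → ZMod q => kwt a = e ∧ kwt (-u - a) = e) := by
    apply Finset.filter_congr
    intro a _
    simp only [Finset.mem_filter, Finset.mem_univ, true_and]
  rw [hfil]
end T4
section T5
open Finset Polynomial
variable {n q : ℕ} [NeZero q]

/-- generating polynomial factors for counting. -/
noncomputable def polyA (q : ℕ) : (Polynomial ℕ)[X] :=
  Polynomial.C 1 + Polynomial.C (Polynomial.C (q - 1) * X) * X

noncomputable def polyB (q : ℕ) : (Polynomial ℕ)[X] :=
  Polynomial.C X + Polynomial.C (1 + Polynomial.C (q - 2) * X) * X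

lemma count_genpoly (hq : 3 ≤ q) (w : Fin n → ZMod q) :
    ∑ a : Fin n → ZMod q,
        Polynomial.C ((X : Polynomial ℕ) ^ kwt a) * (X : (Polynomial ℕ)[X]) ^ kwt (w - a)
      = polyA q ^ (n - kwt w) * polyB q ^ kwt w := by
  classical
  have hterm : ∀ a : Fin n → ZMod q,
      Polynomial.C ((X : Polynomial ℕ) ^ kwt a) * (X : (Polynomial ℕ)[X]) ^ kwt (w - a)
        = ∏ j, (Polynomial.C ((X : Polynomial ℕ) ^ (if a j ≠ 0 then 1 else 0))
            * (X : (Polynomial ℕ)[X]) ^ (if w j - a j ≠ 0 then 1 else 0)) := by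
    intro a
    rw [Finset.prod_mul_distrib]
    congr 1
    · rw [kwt, Finset.card_filter, ← map_prod, ← Finset.prod_pow_eq_pow_sum]
    · rw [kwt, Finset.card_filter, ← Finset.prod_pow_eq_pow_sum Finset.univ
          (fun i => if (w - a) i ≠ 0 then 1 else 0) (X : (Polynomial ℕ)[X])]
      exact Finset.prod_congr rfl fun j _ => by rw [Pi.sub_apply]
  simp_rw [hterm]
  rw [← Fintype.piFinset_univ,
    Finset.sum_prod_piFinset (Finset.univ : Finset (ZMod q))
      (fun j c => Polynomial.C ((X : Polynomial ℕ) ^ (if c ≠ 0 then 1 else 0))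
        * (X : (Polynomial ℕ)[X]) ^ (if w j - c ≠ 0 then 1 else 0))]
  have hinner : ∀ j : Fin n,
      (∑ c : ZMod q, Polynomial.C ((X : Polynomial ℕ) ^ (if c ≠ 0 then 1 else 0))
          * (X : (Polynomial ℕ)[X]) ^ (if w j - c ≠ 0 then 1 else 0))
        = if w j = 0 then polyA q else polyB q := by
    intro j
    by_cases hw : w j = 0
    · rw [if_pos hw]
      rw [Finset.sum_eq_sum_sdiff_singleton_add (Finset.mem_univ (0 : ZMod q))]
      have hdiff : ∀ c ∈ Finset.univ \ {(0 : ZMod q)},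
          Polynomial.C ((X : Polynomial ℕ) ^ (if c ≠ 0 then 1 else 0))
              * (X : (Polynomial ℕ)[X]) ^ (if w j - c ≠ 0 then 1 else 0)
            = Polynomial.C (X : Polynomial ℕ) * X := by
        intro c hc
        have hc0 : c ≠ 0 := by simpa using (Finset.mem_sdiff.mp hc).2
        have hwc : w j - c ≠ 0 := by
          rw [hw, zero_sub]; exact neg_ne_zero.mpr hc0
        simp [hc0, hwc]
      rw [Finset.sum_congr rfl hdiff, Finset.sum_const]
      have hcard : (Finset.univ \ {(0 : ZMod q)}).card = q - 1 := by
        rw [Finset.card_sdiff_of_subset (by simp), Finset.card_univ, ZMod.card, Finset.card_singleton]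
      rw [hcard]
      have h0 : Polynomial.C ((X : Polynomial ℕ) ^ (if (0 : ZMod q) ≠ 0 then 1 else 0))
          * (X : (Polynomial ℕ)[X]) ^ (if w j - 0 ≠ 0 then 1 else 0) = 1 := by
        simp [hw]
      rw [h0, polyA, nsmul_eq_mul]
      rw [show ((q - 1 : ℕ) : (Polynomial ℕ)[X])
          = Polynomial.C (Polynomial.C (q - 1 : ℕ)) by push_cast; rfl]
      rw [map_one, map_mul]
      ring
    · rw [if_neg hw]
      have hsplit : (Finset.univ : Finset (ZMod q))
          = insert 0 (insert (w j) (Finset.univ \ {0, w j})) := by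
        ext c
        simp only [Finset.mem_univ, Finset.mem_insert, Finset.mem_sdiff, Finset.mem_insert,
          Finset.mem_singleton, true_iff, true_and]
        by_cases h1 : c = 0
        · tauto
        · by_cases h2 : c = w j <;> tauto
      rw [hsplit]
      rw [Finset.sum_insert (by simp [Ne.symm hw]), Finset.sum_insert (by simp)]
      have hrest : ∀ c ∈ Finset.univ \ {(0 : ZMod q), w j},
          Polynomial.C ((X : Polynomial ℕ) ^ (if c ≠ 0 then 1 else 0))
              * (X : (Polynomial ℕ)[X]) ^ (if w j - c ≠ 0 then 1 else 0)
            = Polynomial.C (X : Polynomial ℕ) * X := by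
        intro c hc
        simp only [Finset.mem_sdiff, Finset.mem_insert, Finset.mem_singleton] at hc
        have hc0 : c ≠ 0 := fun h => hc.2 (Or.inl h)
        have hcw : w j - c ≠ 0 := sub_ne_zero.mpr (fun h => hc.2 (Or.inr h.symm))
        simp [hc0, hcw]
      rw [Finset.sum_congr rfl hrest, Finset.sum_const]
      have hcard : (Finset.univ \ {(0 : ZMod q), w j}).card = q - 2 := by
        rw [Finset.card_sdiff_of_subset (by simp), Finset.card_univ, ZMod.card]
        rw [Finset.card_insert_of_notMem (by simp [Ne.symm hw]), Finset.card_singleton]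
      rw [hcard]
      have h0 : Polynomial.C ((X : Polynomial ℕ) ^ (if (0 : ZMod q) ≠ 0 then 1 else 0))
          * (X : (Polynomial ℕ)[X]) ^ (if w j - 0 ≠ 0 then 1 else 0) = X := by
        have h2 : w j - 0 ≠ 0 := by simpa using hw
        simp [h2, hw]
      have h1 : Polynomial.C ((X : Polynomial ℕ) ^ (if (w j) ≠ 0 then 1 else 0))
          * (X : (Polynomial ℕ)[X]) ^ (if w j - w j ≠ 0 then 1 else 0)
            = Polynomial.C (X : Polynomial ℕ) := by
        simp [hw]
      rw [h0, h1, polyB, nsmul_eq_mul]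
      rw [show ((q - 2 : ℕ) : (Polynomial ℕ)[X])
          = Polynomial.C (Polynomial.C (q - 2 : ℕ)) by push_cast; rfl]
      rw [map_add, map_one, map_mul]
      ring
  rw [Finset.prod_congr rfl (fun j _ => hinner j), prod_ite_wt]
end T5
section T6
open Finset Polynomial
variable {n q : ℕ} [NeZero q]

lemma natC (c : ℕ) : (c : Polynomial ℕ) = Polynomial.C c := by
  rw [← Polynomial.C_eq_natCast c, Nat.cast_id]

lemma count_coeff (e : ℕ) (w : Fin n → ZMod q) :
    (((∑ a : Fin n → ZMod q,
        Polynomial.C ((X : Polynomial ℕ) ^ kwt a)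
          * (X : (Polynomial ℕ)[X]) ^ kwt (w - a)).coeff e).coeff e)
      = (Finset.univ.filter (fun a : Fin n → ZMod q => kwt a = e ∧ kwt (w - a) = e)).card := by
  classical
  rw [finset_sum_coeff]
  have h1 : ∀ a : Fin n → ZMod q,
      (Polynomial.C ((X : Polynomial ℕ) ^ kwt a) * (X : (Polynomial ℕ)[X]) ^ kwt (w - a)).coeff e
        = if kwt (w - a) = e then (X : Polynomial ℕ) ^ kwt a else 0 := by
    intro a
    rw [coeff_C_mul, coeff_X_pow]
    by_cases h : kwt (w - a) = e
    · simp [h]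
    · simp [h, Ne.symm h]
  rw [Finset.sum_congr rfl fun a _ => h1 a, finset_sum_coeff]
  have h2 : ∀ a : Fin n → ZMod q,
      ((if kwt (w - a) = e then (X : Polynomial ℕ) ^ kwt a else 0).coeff e)
        = if kwt a = e ∧ kwt (w - a) = e then 1 else 0 := by
    intro a
    by_cases h : kwt (w - a) = e
    · rw [if_pos h, coeff_X_pow]
      by_cases h' : kwt a = e
      · simp [h, h']
      · simp [h, h', Ne.symm h']
    · simp [h]
  rw [Finset.sum_congr rfl fun a _ => h2 a, Finset.card_filter]

/-- the `ℕ`-valued right-hand side. -/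
def rhsCount (n q e x : ℕ) : ℕ :=
  ∑ s ∈ (Finset.range (e + 1)).filter (fun s => e - x ≤ s ∧ 2 * s + x ≤ 2 * e),
    x.choose (2 * x + 2 * s - 2 * e) * (n - x).choose s *
      (2 * x + 2 * s - 2 * e).choose (x + s - e) * (q - 2) ^ (2 * e - 2 * s - x) * (q - 1) ^ s

lemma coeff_AB (x e : ℕ) :
    (((polyA q ^ (n - x) * polyB q ^ x).coeff e).coeff e) = rhsCount n q e x := by
  classical
  rw [coeff_mul, Finset.Nat.sum_antidiagonal_eq_sum_range_succ_mk, finset_sum_coeff]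
  have hA : ∀ s, (polyA q ^ (n - x)).coeff s
      = ((n - x).choose s : Polynomial ℕ) * (Polynomial.C (q - 1 : ℕ) * X) ^ s := by
    intro s
    rw [polyA, coeff_pow_CC, one_pow, mul_one]
  have hB : ∀ m, (polyB q ^ x).coeff m
      = (x.choose m : Polynomial ℕ) * (1 + Polynomial.C (q - 2 : ℕ) * X) ^ m
          * (X : Polynomial ℕ) ^ (x - m) := by
    intro m
    rw [polyB, coeff_pow_CC]
  have key : ∀ s, ((((n - x).choose s : Polynomial ℕ) * (Polynomial.C (q - 1 : ℕ) * X) ^ s *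
      ((x.choose (e - s) : Polynomial ℕ) * (1 + Polynomial.C (q - 2 : ℕ) * X) ^ (e - s)
        * (X : Polynomial ℕ) ^ (x - (e - s)))).coeff e)
      = (n - x).choose s * (q - 1) ^ s * x.choose (e - s) *
          (if s + (x - (e - s)) ≤ e then
            (e - s).choose (e - (s + (x - (e - s)))) * (q - 2) ^ (e - (s + (x - (e - s)))) else 0)
      := by
    intro s
    have harr : (((n - x).choose s : Polynomial ℕ) * (Polynomial.C (q - 1 : ℕ) * X) ^ s *
        ((x.choose (e - s) : Polynomial ℕ) * (1 + Polynomial.C (q - 2 : ℕ) * X) ^ (e - s)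
          * (X : Polynomial ℕ) ^ (x - (e - s))))
        = (Polynomial.C ((n - x).choose s * (q - 1) ^ s * x.choose (e - s) : ℕ)
            * (1 + Polynomial.C (q - 2 : ℕ) * X) ^ (e - s)) * X ^ (s + (x - (e - s))) := by
      simp only [natC, mul_pow, ← Polynomial.C_pow, map_mul, pow_add]
      ring
    rw [harr, coeff_mul_X_pow']
    by_cases hK : s + (x - (e - s)) ≤ e
    · rw [if_pos hK, if_pos hK, coeff_C_mul,
        show ((1 : Polynomial ℕ) + Polynomial.C (q - 2 : ℕ) * X)
          = Polynomial.C 1 + Polynomial.C (q - 2 : ℕ) * X by rw [Polynomial.C_1],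
        coeff_pow_CC, one_pow, mul_one]
      simp
    · rw [if_neg hK, if_neg hK, mul_zero]
  have hsum : ∀ s ∈ Finset.range (e + 1),
      ((polyA q ^ (n - x)).coeff s * (polyB q ^ x).coeff (e - s)).coeff e
      = (n - x).choose s * (q - 1) ^ s * x.choose (e - s) *
          (if s + (x - (e - s)) ≤ e then
            (e - s).choose (e - (s + (x - (e - s)))) * (q - 2) ^ (e - (s + (x - (e - s)))) else 0)
      := fun s _ => by rw [hA, hB]; exact key s
  rw [Finset.sum_congr rfl hsum, rhsCount, Finset.sum_filter]
  refine Finset.sum_congr rfl fun s hs => ?_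
  have hse : s ≤ e := by simpa using Nat.lt_succ_iff.mp (Finset.mem_range.mp hs)
  by_cases h1 : e ≤ x + s
  · -- then e - s ≤ x
    have hmx : e - s ≤ x := by omega
    by_cases h2 : 2 * s + x ≤ 2 * e
    · have hK : s + (x - (e - s)) ≤ e := by omega
      have hcond : e - x ≤ s ∧ 2 * s + x ≤ 2 * e := ⟨by omega, h2⟩
      rw [if_pos hK, if_pos hcond]
      have hr : e - (s + (x - (e - s))) = 2 * e - 2 * s - x := by omega
      rw [hr]
      have hchoose : x.choose (e - s) * (e - s).choose (2 * e - 2 * s - x)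
          = x.choose (2 * x + 2 * s - 2 * e) * (2 * x + 2 * s - 2 * e).choose (x + s - e) := by
        rw [Nat.choose_mul (n := x) (show 2 * e - 2 * s - x ≤ e - s by omega)]
        have e1 : x - (2 * e - 2 * s - x) = 2 * x + 2 * s - 2 * e := by omega
        have e2 : e - s - (2 * e - 2 * s - x) = x + s - e := by omega
        rw [e1, e2]
        congr 1
        rw [← Nat.choose_symm (show 2 * e - 2 * s - x ≤ x by omega), e1]
      calc (n - x).choose s * (q - 1) ^ s * x.choose (e - s) *
            ((e - s).choose (2 * e - 2 * s - x) * (q - 2) ^ (2 * e - 2 * s - x))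
          = (x.choose (e - s) * (e - s).choose (2 * e - 2 * s - x)) * (n - x).choose s
              * (q - 2) ^ (2 * e - 2 * s - x) * (q - 1) ^ s := by ring
        _ = _ := by rw [hchoose]; ring
    · have hK : ¬ (s + (x - (e - s)) ≤ e) := by omega
      rw [if_neg hK, if_neg (by tauto), mul_zero]
  · -- x < e - s, so x.choose (e - s) = 0
    have hlt : x < e - s := by omega
    rw [Nat.choose_eq_zero_of_lt hlt,
      if_neg (show ¬(e - x ≤ s ∧ 2 * s + x ≤ 2 * e) by omega)]
    ring
end T6
section T7
open Finset Polynomial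
variable {n q : ℕ} [NeZero q]

lemma count_eq (e : ℕ) (hq : 3 ≤ q) (w : Fin n → ZMod q) :
    (Finset.univ.filter (fun a : Fin n → ZMod q => kwt a = e ∧ kwt (w - a) = e)).card
      = rhsCount n q e (kwt w) := by
  rw [← count_coeff e w, count_genpoly hq w, coeff_AB]
end T7

theorem F_e_evaluation' (n q e x : ℕ) (hn : 1 ≤ n) (hq : 3 ≤ q)
    (he : e ≤ n) (hx : x ≤ n) :
    (∑ i ∈ Finset.range (n + 1), (kraw n q e i) ^ 2 * kraw n q i x
      = (q : ℤ) ^ n *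
          ∑ s ∈ (Finset.range (e + 1)).filter (fun s => e - x ≤ s ∧ 2 * s + x ≤ 2 * e),
            ((x.choose (2 * x + 2 * s - 2 * e)) : ℤ) * ((n - x).choose s) *
              ((2 * x + 2 * s - 2 * e).choose (x + s - e)) *
              ((q : ℤ) - 2) ^ (2 * e - 2 * s - x) * ((q : ℤ) - 1) ^ s) ∧
    (2 * e < x → ∑ i ∈ Finset.range (n + 1), (kraw n q e i) ^ 2 * kraw n q i x = 0) := by
  haveI : NeZero q := ⟨by omega⟩
  haveI : Fact (1 < q) := ⟨by omega⟩
  classical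
  set u : Fin n → ZMod q := fun j => if (j : ℕ) < x then (1 : ZMod q) else 0 with hu
  have hwtu : kwt u = x := by
    rw [kwt]
    have hfe : (Finset.univ.filter fun j : Fin n => u j ≠ 0)
        = Finset.univ.filter fun j : Fin n => (j : ℕ) < x := by
      apply Finset.filter_congr
      intro j _
      by_cases h : (j : ℕ) < x <;> simp [hu, h]
    rw [hfe]
    have hbij := Finset.card_bij
      (s := Finset.univ.filter fun j : Fin n => (j : ℕ) < x) (t := Finset.range x)
      (fun j _ => (j : ℕ))
      (fun j hj => Finset.mem_range.mpr (Finset.mem_filter.mp hj).2)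
      (fun a _ b _ h => Fin.val_injective h)
      (fun k hk => ⟨⟨k, lt_of_lt_of_le (Finset.mem_range.mp hk) hx⟩,
        Finset.mem_filter.mpr ⟨Finset.mem_univ _, by simpa using Finset.mem_range.mp hk⟩, rfl⟩)
    rw [hbij, Finset.card_range]
  have h1 : (∑ i ∈ Finset.range (n + 1), (kraw n q e i) ^ 2 * kraw n q i x)
      = (q : ℤ) ^ n * (rhsCount n q e x : ℤ) := by
    have hC := lhs_eq_count (n := n) (q := q) e u
    rw [hwtu] at hC
    have hcount : (Finset.univ.filter (fun a : Fin n → ZMod q =>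
        kwt a = e ∧ kwt (-u - a) = e)).card = rhsCount n q e x := by
      have h := count_eq (n := n) (q := q) e hq (-u)
      rw [kwt_neg, hwtu] at h
      exact h
    rw [hcount] at hC
    exact_mod_cast hC
  have h2 : ((rhsCount n q e x : ℕ) : ℤ)
      = ∑ s ∈ (Finset.range (e + 1)).filter (fun s => e - x ≤ s ∧ 2 * s + x ≤ 2 * e),
          ((x.choose (2 * x + 2 * s - 2 * e)) : ℤ) * ((n - x).choose s) *
            ((2 * x + 2 * s - 2 * e).choose (x + s - e)) *
            ((q : ℤ) - 2) ^ (2 * e - 2 * s - x) * ((q : ℤ) - 1) ^ s := by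
    have c2 : ((q - 2 : ℕ) : ℤ) = (q : ℤ) - 2 := by omega
    have c1 : ((q - 1 : ℕ) : ℤ) = (q : ℤ) - 1 := by omega
    rw [rhsCount]
    push_cast [c2, c1]
    rfl
  constructor
  · rw [h1, h2]
  · intro hxe
    rw [h1]
    have hempty : (Finset.range (e + 1)).filter
        (fun s => e - x ≤ s ∧ 2 * s + x ≤ 2 * e) = ∅ :=
      Finset.filter_false_of_mem (fun s _ => by omega)
    rw [rhsCount, hempty]
    simp


/-- Evaluation of the polynomial `F_e` (with Krawtchouk coefficients `f_i = K_e(q;i)²`)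
at an integer point `x`:
`∑_{i=0}^n K_e(q;i)² K_i(q;x) = qⁿ ∑_s C(x,2x+2s-2e) C(n-x,s) C(2x+2s-2e,x+s-e)
(q-2)^{2e-2s-x} (q-1)^s`, the sum over `max(0,e-x) ≤ s`, `2s+x ≤ 2e`.
In particular the left-hand side vanishes for `x > 2e`. -/
theorem F_e_evaluation (n q e x : ℕ) (hn : 1 ≤ n) (hq : 3 ≤ q)
    (he : e ≤ n) (hx : x ≤ n) :
    (∑ i ∈ Finset.range (n + 1), (kraw n q e i) ^ 2 * kraw n q i x
      = (q : ℤ) ^ n *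
          ∑ s ∈ (Finset.range (e + 1)).filter (fun s => e - x ≤ s ∧ 2 * s + x ≤ 2 * e),
            ((x.choose (2 * x + 2 * s - 2 * e)) : ℤ) * ((n - x).choose s) *
              ((2 * x + 2 * s - 2 * e).choose (x + s - e)) *
              ((q : ℤ) - 2) ^ (2 * e - 2 * s - x) * ((q : ℤ) - 1) ^ s) ∧
    (2 * e < x → ∑ i ∈ Finset.range (n + 1), (kraw n q e i) ^ 2 * kraw n q i x = 0) := F_e_evaluation' n q e x hn hq he hx
end
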